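/- arXiv:1608.03270 — 8 statements merged into one kernel-verified Lean document; each statement's English description precedes it below -/
import Mathlib

section
/- Let x, e ∈ R^n_{>0} be such that M = (E + L)X is strictly RCDD, where L is a directed Laplacian, E = diag(e), X = diag(x). Let g ∈ R^n_{>0} with ||g||₁ = 1. Then x* := X M⁻¹ g is entrywise positive and (E − g eᵀ + L) diag(x*) is an Eulerian Laplacian. -/
/-!
Since `L` has zero column sums and nonpositive off-diagonal entries, `M = (E + L) X` is a
Z-matrix with column sums `e ∘ x > 0`, hence with positive diagonal; strict row dominance then
makes `M` nonsingular (Gershgorin) and gives it nonnegative row sums, so `y = M⁻¹ g` is positive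
by a minimum principle, and `x* = x ∘ y`. The matrix `E - g eᵀ + L` has zero column sums because
`1ᵀ g = 1`, and its rows, rescaled by `x*`, sum to `(M y)ᵢ - gᵢ (eᵀ x*) = gᵢ - gᵢ = 0`, because
`eᵀ x* = 1ᵀ M y = 1ᵀ g = 1`.
-/

open Matrix Finset

/-- `L` is a directed Laplacian: nonpositive off-diagonal entries and zero column sums. -/
def IsDirLaplacian {n : ℕ} (L : Matrix (Fin n) (Fin n) ℝ) : Prop :=
  (∀ i j, i ≠ j → L i j ≤ 0) ∧ (∀ j, ∑ i, L i j = 0)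

/-- `L` is an Eulerian directed Laplacian: additionally all row sums vanish. -/
def IsEulerianLaplacian {n : ℕ} (L : Matrix (Fin n) (Fin n) ℝ) : Prop :=
  IsDirLaplacian L ∧ (∀ i, ∑ j, L i j = 0)

/-- `M` is strictly RCDD: it is `α`-row and column diagonally dominant for some `α > 0`. -/
def IsStrictlyRCDD {n : ℕ} (M : Matrix (Fin n) (Fin n) ℝ) : Prop :=
  ∃ α : ℝ, 0 < α ∧
    (∀ i, (1 + α) * ∑ j ∈ Finset.univ.erase i, |M i j| ≤ M i i) ∧
    (∀ i, (1 + α) * ∑ j ∈ Finset.univ.erase i, |M j i| ≤ M i i)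

section ZMatrix

variable {ι : Type*} [Fintype ι]

theorem Matrix.sum_diagonal_col [DecidableEq ι] (e : ι → ℝ) (j : ι) :
    ∑ i, diagonal e i j = e j := by
  simp [diagonal_apply]

theorem Matrix.sum_mulVec_eq_sum_colSum_mul (M : Matrix ι ι ℝ) (y : ι → ℝ) :
    ∑ i, (M *ᵥ y) i = ∑ j, (∑ i, M i j) * y j := by
  simp only [mulVec, dotProduct, sum_mul]
  exact sum_comm

variable {M : Matrix ι ι ℝ}

theorem Matrix.diag_pos_of_sum_col_pos [DecidableEq ι] (hoff : ∀ i j, i ≠ j → M i j ≤ 0)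
    (hcol : ∀ j, 0 < ∑ i, M i j) (j : ι) : 0 < M j j := by
  have hrest : ∑ i ∈ univ.erase j, M i j ≤ 0 :=
    sum_nonpos fun i hi => hoff i j (ne_of_mem_erase hi)
  linarith [hcol j, add_sum_erase univ (fun i => M i j) (mem_univ j)]

theorem Matrix.pos_of_mulVec_pos (hoff : ∀ i j, i ≠ j → M i j ≤ 0)
    (hrow : ∀ i, 0 ≤ ∑ j, M i j) {y : ι → ℝ} (hMy : ∀ i, 0 < (M *ᵥ y) i) (i : ι) :
    0 < y i := by
  obtain ⟨k, -, hk⟩ := exists_min_image univ y ⟨i, mem_univ i⟩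
  by_contra! hyi
  have hbound : (M *ᵥ y) k ≤ (∑ j, M k j) * y k := by
    rw [mulVec, dotProduct, sum_mul]
    refine sum_le_sum fun j _ => ?_
    rcases eq_or_ne k j with rfl | hkj
    · exact le_rfl
    · exact mul_le_mul_of_nonpos_left (hk j (mem_univ j)) (hoff k j hkj)
  have := mul_nonpos_of_nonneg_of_nonpos (hrow k) ((hk i (mem_univ i)).trans hyi)
  linarith [hMy k]

end ZMatrix

section RCDD

variable {n : ℕ} {M : Matrix (Fin n) (Fin n) ℝ}

theorem IsStrictlyRCDD.sum_erase_abs_le (hM : IsStrictlyRCDD M) (i : Fin n) :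
    ∑ j ∈ univ.erase i, |M i j| ≤ M i i := by
  obtain ⟨α, hα, hrow, -⟩ := hM
  have hS : 0 ≤ ∑ j ∈ univ.erase i, |M i j| := sum_nonneg fun j _ => abs_nonneg _
  nlinarith [hrow i]

theorem IsStrictlyRCDD.sum_row_nonneg (hM : IsStrictlyRCDD M) (i : Fin n) :
    0 ≤ ∑ j, M i j := by
  have hrest : -∑ j ∈ univ.erase i, |M i j| ≤ ∑ j ∈ univ.erase i, M i j := by
    rw [← sum_neg_distrib]
    exact sum_le_sum fun j _ => neg_abs_le _
  linarith [hM.sum_erase_abs_le i, add_sum_erase univ (fun j => M i j) (mem_univ i)]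

theorem IsStrictlyRCDD.det_ne_zero (hM : IsStrictlyRCDD M) (hdiag : ∀ i, 0 < M i i) :
    M.det ≠ 0 := by
  refine det_ne_zero_of_sum_row_lt_diag fun i => ?_
  obtain ⟨α, hα, hrow, -⟩ := hM
  simp only [Real.norm_eq_abs, abs_of_pos (hdiag i)]
  have hS : 0 ≤ ∑ j ∈ univ.erase i, |M i j| := sum_nonneg fun j _ => abs_nonneg _
  rcases hS.eq_or_lt with hS0 | hSpos
  · rw [← hS0]; exact hdiag i
  · nlinarith [hrow i]

end RCDD

section Laplacian

variable {n : ℕ} {L : Matrix (Fin n) (Fin n) ℝ}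

theorem IsDirLaplacian.mul_diagonal (hL : IsDirLaplacian L) {d : Fin n → ℝ}
    (hd : ∀ i, 0 ≤ d i) : IsDirLaplacian (L * diagonal d) := by
  refine ⟨fun i j hij => ?_, fun j => ?_⟩
  · rw [Matrix.mul_diagonal]
    exact mul_nonpos_of_nonpos_of_nonneg (hL.1 i j hij) (hd j)
  · simp only [Matrix.mul_diagonal, ← sum_mul, hL.2 j, zero_mul]

theorem IsDirLaplacian.diagonal_sub_add (hL : IsDirLaplacian L) {e g : Fin n → ℝ}
    (he : ∀ i, 0 ≤ e i) (hg : ∀ i, 0 ≤ g i) (hg1 : ∑ i, g i = 1) :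
    IsDirLaplacian (diagonal e - of (fun i j => g i * e j) + L) := by
  refine ⟨fun i j hij => ?_, fun j => ?_⟩
  · simp only [Matrix.add_apply, Matrix.sub_apply, diagonal_apply_ne _ hij, of_apply]
    nlinarith [hL.1 i j hij, mul_nonneg (hg i) (he j)]
  · simp only [Matrix.add_apply, Matrix.sub_apply, of_apply, sum_add_distrib, sum_sub_distrib,
      ← sum_mul, sum_diagonal_col, hg1, hL.2 j]
    ring

theorem IsDirLaplacian.sum_col_diagonal_add_mul_diagonal (hL : IsDirLaplacian L)
    (e x : Fin n → ℝ) (j : Fin n) :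
    ∑ i, ((diagonal e + L) * diagonal x) i j = e j * x j := by
  simp only [Matrix.mul_diagonal, Matrix.add_apply, ← sum_mul, sum_add_distrib, sum_diagonal_col,
    hL.2 j, add_zero]

theorem IsDirLaplacian.sum_row_rescaled_eq_zero (hL : IsDirLaplacian L) {e x y g : Fin n → ℝ}
    (hMy : ((diagonal e + L) * diagonal x) *ᵥ y = g) (hg1 : ∑ i, g i = 1) (i : Fin n) :
    ∑ j, ((diagonal e - of (fun i j => g i * e j) + L) * diagonal (fun j => x j * y j)) i j
      = 0 := by
  have hexy : ∑ j, e j * (x j * y j) = 1 := by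
    rw [← hg1, ← hMy, sum_mulVec_eq_sum_colSum_mul]
    simp only [hL.sum_col_diagonal_add_mul_diagonal, mul_assoc]
  have hrow : ∑ j, ((diagonal e + L) * diagonal x) i j * y j = g i := congrFun hMy i
  simp only [Matrix.mul_diagonal, Matrix.add_apply] at hrow
  calc _ = ∑ j, (diagonal e i j + L i j) * x j * y j - g i * ∑ j, e j * (x j * y j) := by
        simp only [Matrix.mul_diagonal, Matrix.add_apply, Matrix.sub_apply, of_apply, mul_sum,
          ← sum_sub_distrib]
        exact sum_congr rfl fun j _ => by ring
    _ = 0 := by rw [hrow, hexy, mul_one, sub_self]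

end Laplacian

/-- If `M = (E + L) X` is strictly RCDD with `x, e > 0`, and `g > 0` with `‖g‖₁ = 1`,
then `x* = X M⁻¹ g` is entrywise positive and `(E - g eᵀ + L) diag(x*)` is an Eulerian
Laplacian. -/
theorem exact_rescaling {n : ℕ} (L : Matrix (Fin n) (Fin n) ℝ) (hL : IsDirLaplacian L)
    (x e g : Fin n → ℝ)
    (hx : ∀ i, 0 < x i) (he : ∀ i, 0 < e i) (hg : ∀ i, 0 < g i) (hg1 : ∑ i, g i = 1)
    (M : Matrix (Fin n) (Fin n) ℝ)
    (hM : M = (Matrix.diagonal e + L) * Matrix.diagonal x)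
    (hrcdd : IsStrictlyRCDD M)
    (xstar : Fin n → ℝ)
    (hxstar : xstar = (Matrix.diagonal x).mulVec (M⁻¹.mulVec g)) :
    (∀ i, 0 < xstar i) ∧
    IsEulerianLaplacian
      ((Matrix.diagonal e - Matrix.of (fun i j => g i * e j) + L) *
        Matrix.diagonal xstar) := by
  have hMoff : ∀ i j, i ≠ j → M i j ≤ 0 := fun i j hij => by
    rw [hM, Matrix.mul_diagonal, Matrix.add_apply, diagonal_apply_ne _ hij, zero_add]
    exact mul_nonpos_of_nonpos_of_nonneg (hL.1 i j hij) (hx j).le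
  have hMcol : ∀ j, ∑ i, M i j = e j * x j :=
    hM ▸ hL.sum_col_diagonal_add_mul_diagonal e x
  have hdet : M.det ≠ 0 := hrcdd.det_ne_zero <|
    diag_pos_of_sum_col_pos hMoff fun j => hMcol j ▸ mul_pos (he j) (hx j)
  set y := M⁻¹ *ᵥ g
  have hMy : M *ᵥ y = g := by
    rw [mulVec_mulVec, mul_nonsing_inv M (isUnit_iff_ne_zero.mpr hdet), one_mulVec]
  have hy : ∀ i, 0 < y i :=
    pos_of_mulVec_pos hMoff hrcdd.sum_row_nonneg fun i => hMy ▸ hg i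
  obtain rfl : xstar = fun i => x i * y i := by
    rw [hxstar]; ext i; exact mulVec_diagonal x y i
  have hxy : ∀ i, 0 < x i * y i := fun i => mul_pos (hx i) (hy i)
  refine ⟨hxy, ?_, hL.sum_row_rescaled_eq_zero (hM ▸ hMy) hg1⟩
  exact (hL.diagonal_sub_add (fun i => (he i).le) (fun i => (hg i).le) hg1).mul_diagonal
    fun i => (hxy i).le
end

section
/- For nonnegative vectors a, b ∈ R^n_{≥0} and positive z ∈ R^n_{>0} with b_i = max{a_i − (aᵀz/||a||₁)·(a_i/z_i), 0} for each i, one has ||b||₁ ≤ (1/2)||a||₁. -/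
open Finset

/-- For nonnegative `a`, positive `z`, and
`b i = max (a i - (aᵀz/‖a‖₁)·(a i / z i)) 0`, one has `‖b‖₁ ≤ ‖a‖₁ / 2`. -/
theorem one_norm_halves {n : ℕ} (a b z : Fin n → ℝ)
    (ha : ∀ i, 0 ≤ a i) (hz : ∀ i, 0 < z i)
    (hb : ∀ i, b i = max (a i - ((∑ j, a j * z j) / (∑ j, |a j|)) * (a i / z i)) 0) :
    ∑ i, |b i| ≤ (1 / 2) * ∑ i, |a i| := by
  by_cases hA : ∑ j, |a j| = 0
  · have h0 : ∀ i, a i = 0 := by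
      intro i
      have := (Finset.sum_eq_zero_iff_of_nonneg (fun j _ => abs_nonneg (a j))).mp hA i (mem_univ i)
      exact abs_eq_zero.mp this
    have hb0 : ∀ i, b i = 0 := fun i => by simp [hb i, h0 i]
    simp [hb0, hA]
  · have hA' : 0 < ∑ j, |a j| :=
      lt_of_le_of_ne (Finset.sum_nonneg fun j _ => abs_nonneg _) (Ne.symm hA)
    have hS : 0 < ∑ j, a j * z j := by
      rcases (Finset.sum_nonneg (fun j (_ : j ∈ univ) => mul_nonneg (ha j) (hz j).le)).lt_or_eq
        with h | h
      · exact h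
      · exfalso
        have h0 : ∀ j ∈ univ, a j * z j = 0 :=
          (Finset.sum_eq_zero_iff_of_nonneg (fun j _ => mul_nonneg (ha j) (hz j).le)).mp h.symm
        have h1 : ∀ j, a j = 0 := fun j => by
          rcases mul_eq_zero.mp (h0 j (mem_univ j)) with h' | h'
          · exact h'
          · exact absurd h' (hz j).ne'
        apply hA; simp [h1]
    set S := ∑ j, a j * z j with hSdef
    set A := ∑ j, |a j| with hAdef
    set t := S / A with ht
    have ht' : 0 < t := div_pos hS hA'
    have key : ∀ i, |b i| ≤ a i * z i / (4 * t) := by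
      intro i
      have hbnn : 0 ≤ b i := by rw [hb i]; exact le_max_right _ _
      rw [abs_of_nonneg hbnn, hb i]
      apply max_le
      · have hzi := hz i
        have hai := ha i
        have hq : 0 ≤ a i / z i := div_nonneg hai hzi.le
        have hqz : a i / z i * z i = a i := div_mul_cancel₀ _ hzi.ne'
        rw [le_div_iff₀ (by positivity : (0:ℝ) < 4 * t)]
        nlinarith [mul_nonneg hq (sq_nonneg (z i - 2 * t)), sq_nonneg (z i - 2 * t)]
      · exact div_nonneg (mul_nonneg (ha i) (hz i).le) (by linarith)
    have h4t : S / (4 * t) = A / 4 := by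
      rw [ht]
      field_simp
    calc ∑ i, |b i| ≤ ∑ i, a i * z i / (4 * t) := Finset.sum_le_sum fun i _ => key i
      _ = S / (4 * t) := by rw [← Finset.sum_div]
      _ = A / 4 := h4t
      _ ≤ 1 / 2 * A := by linarith
end

section
/- For any vectors u, v ∈ R^n and positive definite matrices A, B ∈ R^{n×n}, (u+v)ᵀ(A+B)⁻¹(u+v) ≤ uᵀA⁻¹u + vᵀB⁻¹v. -/
/-!
`uᵀA⁻¹u` is the maximum over `w` of `2 uᵀw - wᵀAw`, attained at `w = A⁻¹u`. For
`w = (A+B)⁻¹(u+v)` the objective for `(u+v, A+B)` splits as the sum of the objectives for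
`(u, A)` and `(v, B)`, each of which is bounded by its maximum.
-/

open Matrix

namespace Matrix

variable {n : Type*} [Fintype n]

lemma PosSemidef.two_mul_dotProduct_mulVec_sub_le {A : Matrix n n ℝ} (hA : A.PosSemidef)
    (x w : n → ℝ) : 2 * (w ⬝ᵥ A *ᵥ x) - w ⬝ᵥ A *ᵥ w ≤ x ⬝ᵥ A *ᵥ x := by
  have hsymm : x ⬝ᵥ A *ᵥ w = w ⬝ᵥ A *ᵥ x := by
    rw [dotProduct_mulVec, ← mulVec_transpose, ← conjTranspose_eq_transpose_of_trivial,
      hA.isHermitian.eq, dotProduct_comm]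
  have hnonneg : 0 ≤ (x - w) ⬝ᵥ A *ᵥ (x - w) := by
    simpa only [star_trivial] using hA.dotProduct_mulVec_nonneg (x - w)
  simp only [mulVec_sub, sub_dotProduct, dotProduct_sub, hsymm] at hnonneg
  linarith

variable [DecidableEq n]

lemma PosDef.two_mul_dotProduct_sub_le_dotProduct_inv_mulVec {A : Matrix n n ℝ}
    (hA : A.PosDef) (u w : n → ℝ) :
    2 * (u ⬝ᵥ w) - w ⬝ᵥ A *ᵥ w ≤ u ⬝ᵥ A⁻¹ *ᵥ u := by
  have hu : A *ᵥ (A⁻¹ *ᵥ u) = u := by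
    rw [mulVec_mulVec, mul_nonsing_inv A ((isUnit_iff_isUnit_det A).mp hA.isUnit), one_mulVec]
  simpa only [hu, dotProduct_comm w u, dotProduct_comm (A⁻¹ *ᵥ u) u] using
    hA.posSemidef.two_mul_dotProduct_mulVec_sub_le (A⁻¹ *ᵥ u) w

lemma dotProduct_inv_mulVec_eq_two_mul_sub {A : Matrix n n ℝ} (hA : IsUnit A.det) (u : n → ℝ) :
    u ⬝ᵥ A⁻¹ *ᵥ u = 2 * (u ⬝ᵥ A⁻¹ *ᵥ u) - (A⁻¹ *ᵥ u) ⬝ᵥ A *ᵥ (A⁻¹ *ᵥ u) := by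
  rw [mulVec_mulVec, mul_nonsing_inv A hA, one_mulVec, dotProduct_comm (A⁻¹ *ᵥ u) u]
  ring

end Matrix

/-- For vectors `u, v` and positive definite matrices `A, B`:
`(u+v)ᵀ (A+B)⁻¹ (u+v) ≤ uᵀ A⁻¹ u + vᵀ B⁻¹ v`. -/
theorem quad_form_inv_add_le {n : ℕ} (A B : Matrix (Fin n) (Fin n) ℝ)
    (hA : A.PosDef) (hB : B.PosDef) (u v : Fin n → ℝ) :
    (u + v) ⬝ᵥ (A + B)⁻¹.mulVec (u + v) ≤
      u ⬝ᵥ A⁻¹.mulVec u + v ⬝ᵥ B⁻¹.mulVec v := by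
  have hAB : IsUnit (A + B).det := (isUnit_iff_isUnit_det _).mp (hA.add hB).isUnit
  set w := (A + B)⁻¹ *ᵥ (u + v)
  calc (u + v) ⬝ᵥ (A + B)⁻¹ *ᵥ (u + v)
      = 2 * ((u + v) ⬝ᵥ w) - w ⬝ᵥ (A + B) *ᵥ w :=
        dotProduct_inv_mulVec_eq_two_mul_sub hAB (u + v)
    _ = (2 * (u ⬝ᵥ w) - w ⬝ᵥ A *ᵥ w) + (2 * (v ⬝ᵥ w) - w ⬝ᵥ B *ᵥ w) := by
        rw [add_dotProduct, add_mulVec, dotProduct_add]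
        ring
    _ ≤ u ⬝ᵥ A⁻¹ *ᵥ u + v ⬝ᵥ B⁻¹ *ᵥ v :=
        add_le_add (hA.two_mul_dotProduct_sub_le_dotProduct_inv_mulVec u w)
          (hB.two_mul_dotProduct_sub_le_dotProduct_inv_mulVec v w)
end

section
/- If L_i is the directed Laplacian of a simple directed cycle of length k on vertex set V_i with uniform weight w, and U_i = (L_i + L_iᵀ)/2, then L_iᵀ U_i† L_i equals (2w/k) times the Laplacian of the complete graph (clique) on the vertices V_i. -/
/-!
Write `L = w (1 - S)` with `S` the cyclic shift. Since `S` is orthogonal, `L` is normal with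
`Lᵀ L = 2w U`; so `L` commutes with `U = Uᵀ`, hence with `U†`, and `Lᵀ U† L = 2w U U†`.
The product `U U†` is the orthogonal projection onto the range of `U`, which is the orthogonal
complement of the all-ones vector: the columns of `U` sum to zero, and conversely the quadratic
Green's function `G i j = d (d - k) / 2`, `d = (i - j) mod k`, satisfies `(2/w) U G = k I - J`.
Hence `U U† = (k I - J) / k`, which is the clique Laplacian divided by `k`.
-/

open Matrix

/-- `B` is the Moore–Penrose pseudoinverse of `A` (the four Penrose conditions). -/
def IsMoorePenrose {m : Type*} [Fintype m] [DecidableEq m]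
    (A B : Matrix m m ℝ) : Prop :=
  A * B * A = A ∧ B * A * B = B ∧ (A * B)ᵀ = A * B ∧ (B * A)ᵀ = B * A

namespace IsMoorePenrose

variable {m : Type*} [Fintype m] [DecidableEq m] {A B : Matrix m m ℝ}

theorem commute (h : IsMoorePenrose A B) {X : Matrix m m ℝ} (hA : Commute X A)
    (hAt : Commute X Aᵀ) : Commute X B := by
  obtain ⟨h₁, h₂, h₃, h₄⟩ := h
  have hB_left : B * Bᵀ * Aᵀ = B := by
    rw [mul_assoc, ← transpose_mul, h₃, ← mul_assoc, h₂]
  have hB_right : Aᵀ * Bᵀ * B = B := by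
    rw [← transpose_mul, h₄, h₂]
  have hAt_left : B * A * Aᵀ = Aᵀ := by
    rw [← h₄, ← transpose_mul, ← mul_assoc, h₁]
  have hAt_right : Aᵀ * A * B = Aᵀ := by
    rw [mul_assoc, ← h₃, ← transpose_mul, h₁]
  have hXB : X * B = B * A * X * B := calc
    X * B = X * Aᵀ * Bᵀ * B := by rw [mul_assoc X, mul_assoc, hB_right]
    _ = B * A * Aᵀ * X * Bᵀ * B := by rw [hAt.eq, hAt_left]
    _ = B * A * X * (Aᵀ * Bᵀ * B) := by simp only [mul_assoc, ← hAt.eq]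
    _ = B * A * X * B := by rw [hB_right]
  have hBX : B * X = B * X * A * B := calc
    B * X = B * Bᵀ * (Aᵀ * X) := by rw [← mul_assoc, hB_left]
    _ = B * Bᵀ * X * (Aᵀ * A * B) := by rw [← hAt.eq, hAt_right, ← mul_assoc]
    _ = B * Bᵀ * Aᵀ * X * A * B := by simp only [mul_assoc, ← hAt.eq]
    _ = B * X * A * B := by rw [hB_left]
  calc X * B = B * A * X * B := hXB
    _ = B * X * A * B := by rw [mul_assoc B A X, ← hA.eq, ← mul_assoc]
    _ = B * X := hBX.symm

theorem mul_eq_of_range (h : IsMoorePenrose A B) {P X : Matrix m m ℝ} (hP : Pᵀ = P)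
    (hAX : A * X = P) (hPA : P * A = A) : A * B = P := by
  obtain ⟨h₁, -, h₃, -⟩ := h
  have hABP : A * B * P = P := by rw [← hAX, ← mul_assoc, h₁]
  calc A * B = P * (A * B) := by rw [← mul_assoc, hPA]
    _ = (A * B * P)ᵀ := by rw [transpose_mul, hP, h₃]
    _ = P := by rw [hABP, hP]

end IsMoorePenrose

theorem of_ite_eq_smul_one_sub_of_one {n : Type*} [Fintype n] [DecidableEq n] (c : ℝ) :
    (of fun i j : n => if i = j then c - 1 else -1) = c • 1 - of 1 := by
  ext i j
  by_cases hij : i = j <;> simp [hij, one_apply]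

section Cycle

variable (k : ℕ) [NeZero k]

def cycleShift : Matrix (Fin k) (Fin k) ℝ := Equiv.Perm.permMatrix ℝ (Equiv.subRight 1)

def directedCycleLaplacian : Matrix (Fin k) (Fin k) ℝ := 1 - cycleShift k

def cycleLaplacian : Matrix (Fin k) (Fin k) ℝ :=
  directedCycleLaplacian k + (directedCycleLaplacian k)ᵀ

noncomputable def cycleGreen : Matrix (Fin k) (Fin k) ℝ :=
  circulant fun e => (e.val : ℝ) * (e.val - k) / 2

variable {k}

theorem Fin.val_add_one_eq_ite (e : Fin k) :
    (e + 1).val = if e.val + 1 = k then 0 else e.val + 1 := by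
  rw [Fin.val_add, Fin.val_one', Nat.add_mod_mod]
  split_ifs with h
  · rw [h, Nat.mod_self]
  · exact Nat.mod_eq_of_lt (by omega)

theorem Fin.val_sub_one_sub_val (e : Fin k) :
    ((e - 1).val : ℝ) - e.val = if e = 0 then (k : ℝ) - 1 else -1 := by
  have key := Fin.val_add_one_eq_ite (e - 1)
  rw [sub_add_cancel] at key
  by_cases h : (e - 1).val + 1 = k
  · rw [if_pos h] at key
    rw [if_pos (Fin.ext key), key]
    have : ((e - 1).val : ℝ) + 1 = k := by exact_mod_cast h
    push_cast
    linarith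
  · rw [if_neg h] at key
    rw [if_neg (fun he => by simp [he] at key), key]
    push_cast
    ring

theorem cycleShift_apply (i j : Fin k) : cycleShift k i j = if i = j + 1 then 1 else 0 := by
  simp [cycleShift, eq_sub_iff_add_eq, eq_comm]

theorem cycleShift_mul_apply (M : Matrix (Fin k) (Fin k) ℝ) (i j : Fin k) :
    (cycleShift k * M) i j = M (i - 1) j := by
  rw [cycleShift, PEquiv.toMatrix_toPEquiv_mul]; rfl

theorem transpose_cycleShift_mul_apply (M : Matrix (Fin k) (Fin k) ℝ) (i j : Fin k) :
    ((cycleShift k)ᵀ * M) i j = M (i + 1) j := by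
  rw [cycleShift, transpose_permMatrix, PEquiv.toMatrix_toPEquiv_mul]; rfl

theorem transpose_cycleShift_mul_cycleShift : (cycleShift k)ᵀ * cycleShift k = 1 := by
  rw [cycleShift, transpose_permMatrix, ← permMatrix_mul, mul_inv_cancel, permMatrix_one]

theorem cycleShift_mul_transpose_cycleShift : cycleShift k * (cycleShift k)ᵀ = 1 := by
  rw [cycleShift, transpose_permMatrix, ← permMatrix_mul, inv_mul_cancel, permMatrix_one]

theorem of_one_mul_cycleShift : (of 1 : Matrix (Fin k) (Fin k) ℝ) * cycleShift k = of 1 := by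
  rw [cycleShift, PEquiv.mul_toMatrix_toPEquiv]; rfl

theorem of_one_mul_transpose_cycleShift :
    (of 1 : Matrix (Fin k) (Fin k) ℝ) * (cycleShift k)ᵀ = of 1 := by
  rw [cycleShift, transpose_permMatrix, PEquiv.mul_toMatrix_toPEquiv]; rfl

theorem of_ite_eq_smul_directedCycleLaplacian (hk : 2 ≤ k) (w : ℝ) :
    (of fun i j : Fin k => if i = j then w else if i = j + 1 then -w else 0) =
      w • directedCycleLaplacian k := by
  ext i j
  by_cases hij : i = j
  · subst hij
    simp [directedCycleLaplacian, cycleShift_apply, show k ≠ 1 by omega]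
  · simp only [directedCycleLaplacian, cycleShift_apply, hij, of_apply, if_false,
      Matrix.smul_apply, Matrix.sub_apply, one_apply, zero_sub, smul_eq_mul]
    split_ifs <;> ring

theorem transpose_directedCycleLaplacian_mul_self :
    (directedCycleLaplacian k)ᵀ * directedCycleLaplacian k = cycleLaplacian k := by
  rw [cycleLaplacian, directedCycleLaplacian, transpose_sub, transpose_one, sub_mul, mul_sub,
    mul_sub, transpose_cycleShift_mul_cycleShift]
  noncomm_ring

theorem directedCycleLaplacian_mul_transpose_self :
    directedCycleLaplacian k * (directedCycleLaplacian k)ᵀ = cycleLaplacian k := by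
  rw [cycleLaplacian, directedCycleLaplacian, transpose_sub, transpose_one, sub_mul, mul_sub,
    mul_sub, cycleShift_mul_transpose_cycleShift]
  noncomm_ring

theorem of_one_mul_cycleLaplacian :
    (of 1 : Matrix (Fin k) (Fin k) ℝ) * cycleLaplacian k = 0 := by
  rw [cycleLaplacian, directedCycleLaplacian, transpose_sub, transpose_one, mul_add, mul_sub,
    mul_sub, of_one_mul_cycleShift, of_one_mul_transpose_cycleShift, mul_one, sub_self, add_zero]

theorem cycleGreen_add_one_sub (i j : Fin k) :
    cycleGreen k (i + 1) j - cycleGreen k i j = (i - j).val + (1 - k) / 2 := by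
  simp only [cycleGreen, circulant_apply]
  rw [add_sub_right_comm, Fin.val_add_one_eq_ite]
  split_ifs with h
  · have : ((i - j).val : ℝ) = k - 1 := by
      rw [eq_sub_iff_add_eq]; exact_mod_cast h
    push_cast
    rw [this]
    ring
  · push_cast
    ring

theorem cycleLaplacian_mul_cycleGreen :
    cycleLaplacian k * cycleGreen k = (k : ℝ) • 1 - of 1 := by
  ext i j
  have hprev := cycleGreen_add_one_sub (i - 1) j
  rw [sub_add_cancel, sub_right_comm i 1 j] at hprev
  have hnext := cycleGreen_add_one_sub i j
  have hval := Fin.val_sub_one_sub_val (i - j)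
  rw [if_congr sub_eq_zero rfl rfl] at hval
  simp only [cycleLaplacian, directedCycleLaplacian, transpose_sub, transpose_one, add_mul,
    sub_mul, one_mul, Matrix.add_apply, Matrix.sub_apply, cycleShift_mul_apply,
    transpose_cycleShift_mul_apply, Matrix.smul_apply, one_apply, of_apply, Pi.one_apply]
  split_ifs at hval ⊢ <;> simp only [smul_eq_mul, mul_one, mul_zero] <;> linarith

end Cycle

/-- If `L` is the directed Laplacian of the simple directed cycle of length `k`
with uniform weight `w` (edge `j → j+1` of weight `w` for each `j : Fin k`),
and `U = (L + Lᵀ)/2`, then `Lᵀ U† L = (2w/k) ·` (the Laplacian of the clique on the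
`k` vertices). -/
theorem cycle_gives_clique {k : ℕ} [NeZero k] (hk : 2 ≤ k) (w : ℝ) (hw : 0 < w)
    (L U Up K : Matrix (Fin k) (Fin k) ℝ)
    (hL : L = Matrix.of fun i j => if i = j then w else if i = j + 1 then -w else 0)
    (hU : U = (1 / 2 : ℝ) • (L + Lᵀ))
    (hUp : IsMoorePenrose U Up)
    (hK : K = Matrix.of fun i j => if i = j then (k : ℝ) - 1 else -1) :
    Lᵀ * Up * L = (2 * w / (k : ℝ)) • K := by
  have hw₀ : w ≠ 0 := hw.ne'
  rw [of_ite_eq_smul_directedCycleLaplacian hk] at hL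
  rw [of_ite_eq_smul_one_sub_of_one] at hK
  have hUΔ : U = (w / 2) • cycleLaplacian k := by
    rw [hU, hL, transpose_smul, ← smul_add, smul_smul, cycleLaplacian]; ring_nf
  have hLtL : Lᵀ * L = (2 * w) • U := by
    rw [hL, hUΔ, transpose_smul, smul_mul_smul_comm, transpose_directedCycleLaplacian_mul_self,
      smul_smul]; ring_nf
  have hLLt : L * Lᵀ = Lᵀ * L := by
    rw [hL, transpose_smul, smul_mul_smul_comm, smul_mul_smul_comm,
      transpose_directedCycleLaplacian_mul_self, directedCycleLaplacian_mul_transpose_self]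
  have hUt : Uᵀ = U := by
    rw [hUΔ, transpose_smul, cycleLaplacian, transpose_add, transpose_transpose, add_comm]
  have hLU : Commute L U := by
    rw [hU]; exact ((Commute.refl L).add_right hLLt).smul_right _
  have hLUp : Commute L Up := hUp.commute hLU (hUt ▸ hLU)
  have hUUp : U * Up = (k : ℝ)⁻¹ • K := by
    refine hUp.mul_eq_of_range (X := (2 / (w * k)) • cycleGreen k) ?_ ?_ ?_
    · rw [hK, transpose_smul, transpose_sub, transpose_smul, transpose_one]; rfl
    · rw [hUΔ, smul_mul_smul_comm, cycleLaplacian_mul_cycleGreen, hK]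
      congr 1; field_simp
    · rw [hK, hUΔ, smul_mul_smul_comm, sub_mul, of_one_mul_cycleLaplacian, sub_zero,
        smul_mul_assoc, one_mul, smul_smul]
      congr 1; field_simp
  calc Lᵀ * Up * L = Lᵀ * L * Up := by rw [mul_assoc, ← hLUp.eq, mul_assoc]
    _ = (2 * w) • (U * Up) := by rw [hLtL, smul_mul_assoc]
    _ = (2 * w / k) • K := by rw [hUUp, smul_smul, div_eq_mul_inv]
end

section
/- For all a, b in the probability simplex Δ^n and all scalars α ∈ R, ||a − α b||₁ ≥ (1/2)||a − b||₁. -/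
open Finset

/-! Write `a - b = (a - α b) + (α - 1) b`. The second term has `ℓ₁` norm `|α - 1|`, and
`|α - 1| = |∑ i, (a i - α b i)|` because `a` and `b` have the same total mass, so it is bounded
by `‖a - α b‖₁` as well. -/

variable {ι : Type*} [Fintype ι]

theorem sum_abs_sub_le_sum_abs_sub_mul_add (a b : ι → ℝ) (α : ℝ) :
    ∑ i, |a i - b i| ≤ ∑ i, |a i - α * b i| + |α - 1| * ∑ i, |b i| := by
  rw [mul_sum, ← sum_add_distrib]
  refine sum_le_sum fun i _ => ?_
  calc |a i - b i| = |(a i - α * b i) + (α - 1) * b i| := by ring_nf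
    _ ≤ |a i - α * b i| + |(α - 1) * b i| := abs_add_le _ _
    _ = |a i - α * b i| + |α - 1| * |b i| := by rw [abs_mul]

theorem abs_sub_one_mul_abs_sum_le_sum_abs_sub_mul {a b : ι → ℝ} (hab : ∑ i, a i = ∑ i, b i)
    (α : ℝ) : |α - 1| * |∑ i, b i| ≤ ∑ i, |a i - α * b i| :=
  calc |α - 1| * |∑ i, b i| = |∑ i, (a i - α * b i)| := by
        rw [← abs_mul, sum_sub_distrib, hab, ← mul_sum, ← abs_neg]; ring_nf
    _ ≤ ∑ i, |a i - α * b i| := abs_sum_le_sum_abs _ _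

theorem sum_abs_sub_le_two_mul_sum_abs_sub_mul {a b : ι → ℝ} (hb : ∀ i, 0 ≤ b i)
    (hab : ∑ i, a i = ∑ i, b i) (α : ℝ) :
    ∑ i, |a i - b i| ≤ 2 * ∑ i, |a i - α * b i| := by
  have hb_norm : ∑ i, |b i| = |∑ i, b i| := by
    rw [abs_sum_of_nonneg fun i _ => hb i]
    exact sum_congr rfl fun i _ => abs_of_nonneg (hb i)
  calc ∑ i, |a i - b i| ≤ ∑ i, |a i - α * b i| + |α - 1| * ∑ i, |b i| :=
        sum_abs_sub_le_sum_abs_sub_mul_add a b α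
    _ = ∑ i, |a i - α * b i| + |α - 1| * |∑ i, b i| := by rw [hb_norm]
    _ ≤ 2 * ∑ i, |a i - α * b i| := by
        linarith [abs_sub_one_mul_abs_sum_le_sum_abs_sub_mul hab α]

theorem simplex_scaling_lower_bound_general {n : ℕ} (a b : Fin n → ℝ)
    (ha1 : ∑ i, a i = 1)
    (hb : ∀ i, 0 ≤ b i) (hb1 : ∑ i, b i = 1)
    (α : ℝ) :
    (1 / 2) * ∑ i, |a i - b i| ≤ ∑ i, |a i - α * b i| := by
  have := sum_abs_sub_le_two_mul_sum_abs_sub_mul hb (ha1.trans hb1.symm) α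
  linarith

/-- For `a, b` in the probability simplex and any scalar `α`,
`‖a - α b‖₁ ≥ (1/2) ‖a - b‖₁`. -/
theorem simplex_scaling_lower_bound {n : ℕ} (a b : Fin n → ℝ)
    (ha : ∀ i, 0 ≤ a i) (ha1 : ∑ i, a i = 1)
    (hb : ∀ i, 0 ≤ b i) (hb1 : ∑ i, b i = 1)
    (α : ℝ) :
    (1 / 2) * ∑ i, |a i - b i| ≤ ∑ i, |a i - α * b i| :=
  simplex_scaling_lower_bound_general a b ha1 hb hb1 α
end

section
/- Let L = I − W be the directed Laplacian of a strongly connected graph, s its stationary distribution, and M_{pp(β)} = β(I − (1−β)W)⁻¹ the personalized PageRank matrix with restart probability β ∈ (0,1]. Then for every x ∈ Δ^n, (1/(4β))·||M_{pp(β)} x − s||₁ ≤ ||L†||₁. -/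
open Matrix Finset

/-- The personalized PageRank matrix `β (I - (1-β) W)⁻¹` with restart probability `β`. -/
noncomputable def pageRankMatrix {n : ℕ} (W : Matrix (Fin n) (Fin n) ℝ) (β : ℝ) :
    Matrix (Fin n) (Fin n) ℝ :=
  β • ((1 : Matrix (Fin n) (Fin n) ℝ) - (1 - β) • W)⁻¹

/-!
Write `A = I - (1-β) W`, so that `M = β A⁻¹` fixes `s` and `A⁻¹ L = I - β A⁻¹ W`. Since `W` is
an `ℓ₁`-contraction, `‖A⁻¹‖₁ ≤ 1/β`, hence `‖M L‖₁ ≤ β (1 + β ‖A⁻¹‖₁) ≤ 2β`. Irreducibility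
makes the left kernel of `L` the constants, so `L L†` (the orthogonal projection onto the range
of `L`) fixes `x - s`, whose entries sum to `0`. Therefore
`M x - s = M (x - s) = M L (L† (x - s))` has `ℓ₁` norm at most `2β ‖L†‖₁ ‖x - s‖₁ ≤ 4β ‖L†‖₁`.
-/

section L1

variable {ι κ : Type*} [Fintype ι] [Fintype κ]

theorem sum_abs_mulVec_le (B : Matrix ι κ ℝ) {C : ℝ} (hC : ∀ j, ∑ i, |B i j| ≤ C)
    (v : κ → ℝ) : ∑ i, |(B *ᵥ v) i| ≤ C * ∑ j, |v j| :=
  calc ∑ i, |(B *ᵥ v) i| ≤ ∑ i, ∑ j, |B i j| * |v j| :=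
        sum_le_sum fun i _ => (abs_sum_le_sum_abs _ _).trans_eq (by simp only [abs_mul])
    _ = ∑ j, (∑ i, |B i j|) * |v j| := by rw [sum_comm]; simp only [sum_mul]
    _ ≤ ∑ j, C * |v j| := sum_le_sum fun j _ => mul_le_mul_of_nonneg_right (hC j) (abs_nonneg _)
    _ = C * ∑ j, |v j| := (mul_sum _ _ _).symm

variable [DecidableEq ι]

theorem sum_abs_mulVec_le_of_mem_colStochastic {W : Matrix ι ι ℝ}
    (hW : W ∈ colStochastic ℝ ι) (v : ι → ℝ) : ∑ i, |(W *ᵥ v) i| ≤ ∑ i, |v i| := by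
  refine (sum_abs_mulVec_le W (C := 1) (fun j => ?_) v).trans_eq (one_mul _)
  simp only [abs_of_nonneg (nonneg_of_mem_colStochastic hW), sum_col_of_mem_colStochastic hW,
    le_rfl]

variable {W : Matrix ι ι ℝ} (hW : ∀ v : ι → ℝ, ∑ i, |(W *ᵥ v) i| ≤ ∑ i, |v i|)
include hW

theorem one_sub_abs_mul_sum_abs_le (a : ℝ) (z : ι → ℝ) :
    (1 - |a|) * ∑ i, |z i| ≤ ∑ i, |((1 - a • W) *ᵥ z) i| := by
  have hpt : ∀ i, |z i| ≤ |((1 - a • W) *ᵥ z) i| + |a| * |(W *ᵥ z) i| := fun i => by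
    rw [← abs_mul]
    refine le_of_eq_of_le ?_ (abs_add_le _ _)
    simp [sub_mulVec, smul_mulVec]
  have hsum := sum_le_sum fun i (_ : i ∈ univ) => hpt i
  rw [sum_add_distrib, ← mul_sum] at hsum
  nlinarith [mul_le_mul_of_nonneg_left (hW z) (abs_nonneg a)]

theorem isUnit_one_sub_smul {a : ℝ} (ha : |a| < 1) : IsUnit (1 - a • W) := by
  rw [isUnit_iff_isUnit_det, isUnit_iff_ne_zero]
  intro hdet
  obtain ⟨z, hz0, hz⟩ := exists_mulVec_eq_zero_iff.2 hdet
  have hle := one_sub_abs_mul_sum_abs_le hW a z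
  simp only [hz, Pi.zero_apply, abs_zero, sum_const_zero] at hle
  have hsum : ∑ i, |z i| = 0 :=
    le_antisymm (nonpos_of_mul_nonpos_right hle (by linarith)) (sum_nonneg fun _ _ => abs_nonneg _)
  exact hz0 (funext fun i => abs_eq_zero.1 <|
    (sum_eq_zero_iff_of_nonneg fun _ _ => abs_nonneg _).1 hsum i (mem_univ i))

theorem one_sub_abs_mul_sum_abs_inv_mulVec_le {a : ℝ} (ha : |a| < 1) (y : ι → ℝ) :
    (1 - |a|) * ∑ i, |((1 - a • W)⁻¹ *ᵥ y) i| ≤ ∑ i, |y i| := by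
  have hinv := mul_nonsing_inv _ ((isUnit_iff_isUnit_det _).1 (isUnit_one_sub_smul hW ha))
  have h := one_sub_abs_mul_sum_abs_le hW a ((1 - a • W)⁻¹ *ᵥ y)
  rwa [mulVec_mulVec, hinv, one_mulVec] at h

end L1

theorem exists_eq_const_of_vecMul_eq_self {ι : Type*} [Fintype ι] [DecidableEq ι]
    {W : Matrix ι ι ℝ} (hW : W ∈ colStochastic ℝ ι) (hirr : ∀ i j, ∃ k : ℕ, 0 < (W ^ k) i j)
    {u : ι → ℝ} (hu : u ᵥ* W = u) : ∃ c, u = Function.const ι c := by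
  rcases isEmpty_or_nonempty ι with hι | hι
  · exact ⟨0, Subsingleton.elim _ _⟩
  obtain ⟨j, -, hmax⟩ := exists_max_image univ u univ_nonempty
  refine ⟨u j, funext fun i => (hmax i (mem_univ i)).antisymm (not_lt.1 fun hlt => ?_)⟩
  have huk : ∀ k : ℕ, u ᵥ* W ^ k = u := fun k => by
    induction k with
    | zero => exact vecMul_one u
    | succ k ih => rw [pow_succ, ← vecMul_vecMul, ih, hu]
  obtain ⟨k, hk⟩ := hirr i j
  have hPk : W ^ k ∈ colStochastic ℝ ι := pow_mem hW k
  -- `u j` would be a strict average of values `≤ u j`, one of them `u i < u j`.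
  have : ∑ l, u l * (W ^ k) l j < ∑ l, u j * (W ^ k) l j :=
    sum_lt_sum (fun l _ => mul_le_mul_of_nonneg_right (hmax l (mem_univ l))
      (nonneg_of_mem_colStochastic hPk)) ⟨i, mem_univ i, mul_lt_mul_of_pos_right hlt hk⟩
  rw [← mul_sum, sum_col_of_mem_colStochastic hPk, mul_one] at this
  exact this.ne (congrFun (huk k) j)

theorem IsMoorePenrose.mul_mulVec_eq_self {m : Type*} [Fintype m] [DecidableEq m]
    {A B : Matrix m m ℝ} (h : IsMoorePenrose A B) {v : m → ℝ}
    (hv : ∀ w, w ᵥ* A = 0 → w ⬝ᵥ v = 0) : (A * B) *ᵥ v = v := by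
  obtain ⟨hABA, -, hsymm, -⟩ := h
  set P := A * B
  have hPP : P * P = P := by rw [← Matrix.mul_assoc, hABA]
  set w := v - P *ᵥ v with hw
  have hwA : w ᵥ* A = 0 := by
    rw [hw, sub_vecMul, ← vecMul_transpose, hsymm, vecMul_vecMul, hABA, sub_self]
  have hPw : P *ᵥ w = 0 := by rw [hw, mulVec_sub, mulVec_mulVec, hPP, sub_self]
  have hww : w ⬝ᵥ w = 0 := by
    rw [dotProduct_sub w v, hv w hwA, dotProduct_mulVec, ← hsymm, vecMul_transpose, hPw,
      zero_dotProduct, sub_zero]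
  exact (sub_eq_zero.1 (dotProduct_self_eq_zero.1 hww)).symm

theorem laplacian_mul_pinv_mulVec_of_sum_eq_zero {ι : Type*} [Fintype ι] [DecidableEq ι]
    {W Lp : Matrix ι ι ℝ} (hW : W ∈ colStochastic ℝ ι)
    (hirr : ∀ i j, ∃ k : ℕ, 0 < (W ^ k) i j) (hLp : IsMoorePenrose (1 - W) Lp)
    {v : ι → ℝ} (hv : ∑ i, v i = 0) : ((1 - W) * Lp) *ᵥ v = v := by
  refine hLp.mul_mulVec_eq_self fun w hw => ?_
  rw [vecMul_sub, vecMul_one, sub_eq_zero] at hw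
  obtain ⟨c, rfl⟩ := exists_eq_const_of_vecMul_eq_self hW hirr hw.symm
  simp [dotProduct, ← mul_sum, hv]

section PageRank

variable {n : ℕ} {W : Matrix (Fin n) (Fin n) ℝ}
  (hW : ∀ v : Fin n → ℝ, ∑ i, |(W *ᵥ v) i| ≤ ∑ i, |v i|) {β : ℝ} (hβ0 : 0 < β) (hβ1 : β ≤ 1)
include hW hβ0 hβ1

theorem pageRankMatrix_mulVec_of_mulVec_eq_self {s : Fin n → ℝ} (hs : W *ᵥ s = s) :
    pageRankMatrix W β *ᵥ s = s := by
  have hunit := isUnit_one_sub_smul hW (a := 1 - β) (abs_lt.2 ⟨by linarith, by linarith⟩)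
  have hAs : (1 - (1 - β) • W) *ᵥ s = β • s := by
    rw [sub_mulVec, one_mulVec, smul_mulVec, hs, sub_smul, one_smul, sub_sub_cancel]
  rw [pageRankMatrix, smul_mulVec, ← mulVec_smul, ← hAs, mulVec_mulVec,
    nonsing_inv_mul _ ((isUnit_iff_isUnit_det _).1 hunit), one_mulVec]

theorem sum_abs_pageRankMatrix_mulVec_laplacian_le (c : Fin n → ℝ) :
    ∑ i, |(pageRankMatrix W β *ᵥ ((1 - W) *ᵥ c)) i| ≤ 2 * β * ∑ i, |c i| := by
  set A : Matrix (Fin n) (Fin n) ℝ := 1 - (1 - β) • W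
  have hlt : |1 - β| < 1 := abs_lt.2 ⟨by linarith, by linarith⟩
  have hinv := one_sub_abs_mul_sum_abs_inv_mulVec_le hW hlt
  rw [abs_of_nonneg (by linarith), sub_sub_cancel] at hinv
  have hAinvA : A⁻¹ * A = 1 :=
    nonsing_inv_mul _ ((isUnit_iff_isUnit_det _).1 (isUnit_one_sub_smul hW hlt))
  have hL : (1 : Matrix (Fin n) (Fin n) ℝ) - W = A - β • W := by
    simp only [A, sub_smul, one_smul]; abel
  have hML : pageRankMatrix W β *ᵥ ((1 - W) *ᵥ c) = β • (c - β • (A⁻¹ *ᵥ (W *ᵥ c))) := by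
    rw [pageRankMatrix, hL, smul_mulVec, mulVec_mulVec, Matrix.mul_sub, hAinvA, sub_mulVec,
      one_mulVec, Matrix.mul_smul, smul_mulVec, ← mulVec_mulVec]
  rw [hML]
  calc ∑ i, |(β • (c - β • (A⁻¹ *ᵥ (W *ᵥ c)))) i|
      ≤ ∑ i, β * (|c i| + β * |(A⁻¹ *ᵥ (W *ᵥ c)) i|) := sum_le_sum fun i _ => by
        simp only [Pi.smul_apply, Pi.sub_apply, smul_eq_mul, abs_mul, abs_of_pos hβ0]
        gcongr
        exact (abs_sub _ _).trans_eq (by rw [abs_mul, abs_of_pos hβ0])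
    _ = β * (∑ i, |c i| + β * ∑ i, |(A⁻¹ *ᵥ (W *ᵥ c)) i|) := by
        rw [← mul_sum, sum_add_distrib, ← mul_sum]
    _ ≤ β * (∑ i, |c i| + ∑ i, |c i|) := by
        gcongr
        exact (hinv _).trans (hW c)
    _ = 2 * β * ∑ i, |c i| := by ring

end PageRank

theorem pagerank_distance_le_pinv_norm_general {n : ℕ}
    (W : Matrix (Fin n) (Fin n) ℝ)
    (hWnn : ∀ i j, 0 ≤ W i j) (hWcol : ∀ j, ∑ i, W i j = 1)
    (hirr : ∀ i j : Fin n, ∃ k : ℕ, 0 < (W ^ k) i j)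
    (s : Fin n → ℝ) (hs : ∀ i, 0 ≤ s i) (hs1 : ∑ i, s i = 1)
    (hstat : W.mulVec s = s)
    (β : ℝ) (hβ0 : 0 < β) (hβ1 : β ≤ 1)
    (Lp : Matrix (Fin n) (Fin n) ℝ)
    (hLp : IsMoorePenrose ((1 : Matrix (Fin n) (Fin n) ℝ) - W) Lp)
    (x : Fin n → ℝ) (hx : ∀ i, 0 ≤ x i) (hx1 : ∑ i, x i = 1) :
    (1 / (4 * β)) * ∑ i, |((pageRankMatrix W β).mulVec x) i - s i| ≤
      ⨆ j : Fin n, ∑ i, |Lp i j| := by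
  have hWs : W ∈ colStochastic ℝ (Fin n) := mem_colStochastic_iff_sum.2 ⟨hWnn, hWcol⟩
  have hWc := sum_abs_mulVec_le_of_mem_colStochastic hWs
  set S := ⨆ j : Fin n, ∑ i, |Lp i j|
  have hS0 : 0 ≤ S := Real.iSup_nonneg fun j => sum_nonneg fun i _ => abs_nonneg _
  have hLpS : ∀ j, ∑ i, |Lp i j| ≤ S := le_ciSup (Finite.bddAbove_range _)
  set v := x - s with hv
  have hv0 : ∑ i, v i = 0 := by simp [v, sum_sub_distrib, hx1, hs1]
  have hv2 : ∑ i, |v i| ≤ 2 :=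
    calc ∑ i, |v i| ≤ ∑ i, (x i + s i) := sum_le_sum fun i _ =>
          (abs_sub _ _).trans_eq (by rw [abs_of_nonneg (hx i), abs_of_nonneg (hs i)])
      _ = 2 := by rw [sum_add_distrib, hx1, hs1]; norm_num
  have hLv : (1 - W) *ᵥ (Lp *ᵥ v) = v := by
    rw [mulVec_mulVec, laplacian_mul_pinv_mulVec_of_sum_eq_zero hWs hirr hLp hv0]
  have hMx : (pageRankMatrix W β *ᵥ x) - s = pageRankMatrix W β *ᵥ ((1 - W) *ᵥ (Lp *ᵥ v)) := by
    rw [hLv, hv, mulVec_sub, pageRankMatrix_mulVec_of_mulVec_eq_self hWc hβ0 hβ1 hstat]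
  rw [one_div, inv_mul_le_iff₀ (by positivity)]
  calc ∑ i, |(pageRankMatrix W β *ᵥ x) i - s i|
      = ∑ i, |(pageRankMatrix W β *ᵥ ((1 - W) *ᵥ (Lp *ᵥ v))) i| := by rw [← hMx]; rfl
    _ ≤ 2 * β * ∑ i, |(Lp *ᵥ v) i| := sum_abs_pageRankMatrix_mulVec_laplacian_le hWc hβ0 hβ1 _
    _ ≤ 2 * β * (S * 2) := by
        gcongr
        exact (sum_abs_mulVec_le Lp hLpS v).trans (mul_le_mul_of_nonneg_left hv2 hS0)
    _ = 4 * β * S := by ring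

/-- For `L = I - W` the directed Laplacian of a strongly connected graph with stationary
`s`, and `M_{pp(β)}` the personalized PageRank matrix with restart probability
`β ∈ (0,1]`: for every `x ∈ Δⁿ`, `(1/(4β)) ‖M_{pp(β)} x - s‖₁ ≤ ‖L†‖₁`, where `‖L†‖₁`
is the maximum column `ℓ₁` norm of the pseudoinverse. -/
theorem pagerank_distance_le_pinv_norm {n : ℕ} (hn : 0 < n)
    (W : Matrix (Fin n) (Fin n) ℝ)
    (hWnn : ∀ i j, 0 ≤ W i j) (hWcol : ∀ j, ∑ i, W i j = 1)
    (hirr : ∀ i j : Fin n, ∃ k : ℕ, 0 < (W ^ k) i j)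
    (s : Fin n → ℝ) (hs : ∀ i, 0 ≤ s i) (hs1 : ∑ i, s i = 1)
    (hstat : W.mulVec s = s)
    (β : ℝ) (hβ0 : 0 < β) (hβ1 : β ≤ 1)
    (Lp : Matrix (Fin n) (Fin n) ℝ)
    (hLp : IsMoorePenrose ((1 : Matrix (Fin n) (Fin n) ℝ) - W) Lp)
    (x : Fin n → ℝ) (hx : ∀ i, 0 ≤ x i) (hx1 : ∑ i, x i = 1) :
    (1 / (4 * β)) * ∑ i, |((pageRankMatrix W β).mulVec x) i - s i| ≤
      ⨆ j : Fin n, ∑ i, |Lp i j| :=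
  pagerank_distance_le_pinv_norm_general W hWnn hWcol hirr s hs hs1 hstat β hβ0 hβ1 Lp hLp x hx hx1
end

section
/- Let W be the random walk matrix of a strongly connected graph with stationary s, and let M = Σ_{i=0}^{k} α_i W^i be a convex combination of walks of length at most k (α_i ≥ 0, Σα_i = 1). If k < ||L†||₁/(2√n) where L = I − W, then ||M − s1ᵀ||₁ > 1/(2√n). -/
open Matrix Finset

namespace SW
variable {n : ℕ}


noncomputable def toE (x : Fin n → ℝ) : EuclideanSpace ℝ (Fin n) :=
  (WithLp.linearEquiv 2 ℝ (Fin n → ℝ)).symm x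

noncomputable def l2 (x : Fin n → ℝ) : ℝ := ‖toE x‖

lemma l2_nonneg (x : Fin n → ℝ) : 0 ≤ l2 x := norm_nonneg _

lemma l2_eq (x : Fin n → ℝ) : l2 x = Real.sqrt (∑ i, x i ^ 2) := by
  rw [l2, EuclideanSpace.norm_eq]
  congr 1
  refine Finset.sum_congr rfl fun i _ => ?_
  rw [Real.norm_eq_abs, sq_abs]
  rfl

lemma sq_l2 (x : Fin n → ℝ) : l2 x ^ 2 = ∑ i, x i ^ 2 := by
  rw [l2_eq]; exact Real.sq_sqrt (by positivity)

lemma l2_le_l1 (x : Fin n → ℝ) : l2 x ≤ ∑ i, |x i| := by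
  rw [l2_eq]
  have h1 : ∑ i, x i ^ 2 ≤ (∑ i, |x i|) ^ 2 := by
    calc ∑ i, x i ^ 2 = ∑ i, |x i| ^ 2 := by simp [sq_abs]
    _ ≤ (∑ i, |x i|) ^ 2 := Finset.sum_sq_le_sq_sum_of_nonneg fun i _ => abs_nonneg _
  calc Real.sqrt (∑ i, x i ^ 2) ≤ Real.sqrt ((∑ i, |x i|) ^ 2) := Real.sqrt_le_sqrt h1
  _ = ∑ i, |x i| := Real.sqrt_sq (by positivity)

lemma l1_le_sqrt_l2 (x : Fin n → ℝ) : ∑ i, |x i| ≤ Real.sqrt n * l2 x := by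
  have h1 : (∑ i, |x i|) ^ 2 ≤ (n : ℝ) * ∑ i, x i ^ 2 := by
    have := Finset.sum_mul_sq_le_sq_mul_sq Finset.univ (fun _ : Fin n => (1:ℝ)) (fun i => |x i|)
    simpa [sq_abs] using this
  have h2 : (0:ℝ) ≤ Real.sqrt n * l2 x := mul_nonneg (Real.sqrt_nonneg _) (l2_nonneg _)
  have h3 : ∑ i, |x i| = Real.sqrt ((∑ i, |x i|)^2) := (Real.sqrt_sq (Finset.sum_nonneg fun i _ => abs_nonneg _)).symm
  rw [h3, l2_eq]
  calc Real.sqrt ((∑ i, |x i|)^2) ≤ Real.sqrt ((n:ℝ) * ∑ i, x i ^ 2) := Real.sqrt_le_sqrt h1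
  _ = Real.sqrt n * Real.sqrt (∑ i, x i ^ 2) := Real.sqrt_mul (by positivity) _

lemma l2_sum_le {ι : Type*} (s : Finset ι) (f : ι → Fin n → ℝ) :
    l2 (∑ j ∈ s, f j) ≤ ∑ j ∈ s, l2 (f j) := by
  unfold l2 toE
  rw [map_sum]
  exact norm_sum_le _ _

lemma l2_add_le (x y : Fin n → ℝ) : l2 (x + y) ≤ l2 x + l2 y := by
  unfold l2 toE; rw [map_add]; exact norm_add_le _ _

lemma l2_smul (a : ℝ) (x : Fin n → ℝ) : l2 (a • x) = |a| * l2 x := by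
  unfold l2 toE; rw [_root_.map_smul, norm_smul, Real.norm_eq_abs]

lemma dot_le (x y : Fin n → ℝ) : ∑ i, x i * y i ≤ l2 x * l2 y := by
  have h := real_inner_le_norm (toE x) (toE y)
  have h2 : inner ℝ (toE x) (toE y) = ∑ i, x i * y i := by
    rw [PiLp.inner_apply]
    refine Finset.sum_congr rfl fun i _ => ?_
    simp [RCLike.inner_apply]
    exact mul_comm (y i) (x i)
  rw [h2] at h
  exact h



lemma mulVec_apply' (B : Matrix (Fin n) (Fin n) ℝ) (x : Fin n → ℝ) (i : Fin n) :
    B.mulVec x i = ∑ j, B i j * x j := rfl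

/-- ℓ¹→ℓ¹ operator bound from column abs sums. -/
lemma mulVec_l1_le (B : Matrix (Fin n) (Fin n) ℝ) (q : ℝ)
    (hq : ∀ j, ∑ i, |B i j| ≤ q) (x : Fin n → ℝ) :
    ∑ i, |B.mulVec x i| ≤ q * ∑ i, |x i| := by
  calc ∑ i, |B.mulVec x i| = ∑ i, |∑ j, B i j * x j| := by
        refine Finset.sum_congr rfl fun i _ => by rw [mulVec_apply']
  _ ≤ ∑ i, ∑ j, |B i j * x j| :=
        Finset.sum_le_sum fun i _ => Finset.abs_sum_le_sum_abs _ _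
  _ = ∑ j, (∑ i, |B i j|) * |x j| := by
        rw [Finset.sum_comm]
        exact Finset.sum_congr rfl fun j _ => by
          rw [Finset.sum_mul]
          exact Finset.sum_congr rfl fun i _ => abs_mul _ _
  _ ≤ ∑ j, q * |x j| := Finset.sum_le_sum fun j _ => mul_le_mul_of_nonneg_right (hq j) (abs_nonneg _)
  _ = q * ∑ j, |x j| := by rw [Finset.mul_sum]

lemma pow_nonneg (W : Matrix (Fin n) (Fin n) ℝ) (hWnn : ∀ i j, 0 ≤ W i j) :
    ∀ l i j, 0 ≤ (W ^ l) i j := by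
  intro l
  induction l with
  | zero => intro i j; by_cases h : i = j <;> simp [Matrix.one_apply, h]
  | succ l ih =>
    intro i j
    rw [pow_succ, Matrix.mul_apply]
    exact Finset.sum_nonneg fun m _ => mul_nonneg (ih i m) (hWnn m j)

lemma pow_colsum (W : Matrix (Fin n) (Fin n) ℝ) (hWcol : ∀ j, ∑ i, W i j = 1) :
    ∀ l j, ∑ i, (W ^ l) i j = 1 := by
  intro l
  induction l with
  | zero => intro j; simp [Matrix.one_apply]
  | succ l ih =>
    intro j
    calc ∑ i, (W ^ (l+1)) i j = ∑ i, ∑ m, (W ^ l) i m * W m j := by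
          refine Finset.sum_congr rfl fun i _ => by rw [pow_succ, Matrix.mul_apply]
    _ = ∑ m, ∑ i, (W ^ l) i m * W m j := Finset.sum_comm
    _ = ∑ m, W m j := by
          refine Finset.sum_congr rfl fun m _ => ?_
          rw [← Finset.sum_mul, ih m, one_mul]
    _ = 1 := hWcol j

/-- Maximum principle: a vector fixed by `Wᵀ` is constant. -/
lemma fixed_const (hn : 0 < n) (W : Matrix (Fin n) (Fin n) ℝ)
    (hWnn : ∀ i j, 0 ≤ W i j) (hWcol : ∀ j, ∑ i, W i j = 1)
    (hirr : ∀ i j : Fin n, ∃ k : ℕ, 0 < (W ^ k) i j)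
    (x : Fin n → ℝ) (hx : ∀ j, x j = ∑ i, W i j * x i) :
    ∀ i i', x i = x i' := by
  have : Nonempty (Fin n) := ⟨⟨0, hn⟩⟩
  obtain ⟨i₀, -, hi₀⟩ := Finset.exists_max_image (Finset.univ : Finset (Fin n)) x ⟨Classical.arbitrary _, Finset.mem_univ _⟩
  have hmax : ∀ i, x i ≤ x i₀ := fun i => hi₀ i (Finset.mem_univ i)
  -- one-step propagation
  have step1 : ∀ j, x j = x i₀ → ∀ i, 0 < W i j → x i = x i₀ := by
    intro j hj i hWij
    have hsum : ∑ i, W i j * (x i₀ - x i) = 0 := by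
      have : ∑ i, W i j * (x i₀ - x i) = (∑ i, W i j) * x i₀ - ∑ i, W i j * x i := by
        rw [Finset.sum_mul, ← Finset.sum_sub_distrib]
        exact Finset.sum_congr rfl fun i _ => by ring
      rw [this, hWcol j, one_mul, ← hx j, hj, sub_self]
    have hterm := (Finset.sum_eq_zero_iff_of_nonneg
      (fun i _ => mul_nonneg (hWnn i j) (sub_nonneg.2 (hmax i)))).1 hsum i (Finset.mem_univ i)
    have := mul_eq_zero.1 hterm
    rcases this with h | h
    · exact absurd h (ne_of_gt hWij)
    · linarith [sub_eq_zero.1 h]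
  have step : ∀ l : ℕ, ∀ j, x j = x i₀ → ∀ i, 0 < (W ^ l) i j → x i = x i₀ := by
    intro l
    induction l with
    | zero =>
      intro j hj i hpos
      have : (1 : Matrix (Fin n) (Fin n) ℝ) i j ≠ 0 := ne_of_gt hpos
      rw [Matrix.one_apply] at this
      by_cases h : i = j
      · rw [h]; exact hj
      · simp [h] at this
    | succ l ih =>
      intro j hj i hpos
      rw [pow_succ', Matrix.mul_apply] at hpos
      have h0 : ∑ m : Fin n, (0:ℝ) < ∑ m, W i m * (W ^ l) m j := by simpa using hpos
      obtain ⟨m, -, hm⟩ := Finset.exists_lt_of_sum_lt h0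
      have hW : 0 < W i m := by
        rcases lt_or_eq_of_le (hWnn i m) with h | h
        · exact h
        · exfalso; rw [← h, zero_mul] at hm; exact lt_irrefl _ hm
      have hWl : 0 < (W ^ l) m j := by
        rcases lt_or_eq_of_le (pow_nonneg W hWnn l m j) with h | h
        · exact h
        · exfalso; rw [← h, mul_zero] at hm; exact lt_irrefl _ hm
      exact step1 m (ih j hj m hWl) i hW
  intro i i'
  have h1 : ∀ i, x i = x i₀ := by
    intro i
    obtain ⟨l, hl⟩ := hirr i i₀
    exact step l i₀ rfl i hl
  rw [h1 i, h1 i']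






lemma LLp_eq (hn : 0 < n) (W : Matrix (Fin n) (Fin n) ℝ)
    (hWnn : ∀ i j, 0 ≤ W i j) (hWcol : ∀ j, ∑ i, W i j = 1)
    (hirr : ∀ i j : Fin n, ∃ k : ℕ, 0 < (W ^ k) i j)
    (Lp : Matrix (Fin n) (Fin n) ℝ)
    (hLp : IsMoorePenrose (1 - W) Lp) :
    ∀ i j, ((1 - W) * Lp) i j = (1 : Matrix (Fin n) (Fin n) ℝ) i j - (n : ℝ)⁻¹ := by
  set L : Matrix (Fin n) (Fin n) ℝ := 1 - W with hL
  set G : Matrix (Fin n) (Fin n) ℝ := L * Lp with hG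
  have hGsym : Gᵀ = G := hLp.2.2.1
  have hGL : G * L = L := hLp.1
  have hLcol : ∀ m, ∑ i, L i m = 0 := by
    intro m
    have h1 : ∑ i, (1 : Matrix (Fin n) (Fin n) ℝ) i m = 1 := by simp [Matrix.one_apply]
    calc ∑ i, L i m = ∑ i, ((1 : Matrix (Fin n) (Fin n) ℝ) i m - W i m) := by
          refine Finset.sum_congr rfl fun i _ => by rw [hL]; rfl
    _ = 1 - 1 := by rw [Finset.sum_sub_distrib, h1, hWcol m]
    _ = 0 := by ring
  have hGcol : ∀ j, ∑ i, G i j = 0 := by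
    intro j
    calc ∑ i, G i j = ∑ i, ∑ m, L i m * Lp m j := by
          refine Finset.sum_congr rfl fun i _ => by rw [hG, Matrix.mul_apply]
    _ = ∑ m, (∑ i, L i m) * Lp m j := by
          rw [Finset.sum_comm]; exact Finset.sum_congr rfl fun m _ => (Finset.sum_mul _ _ _).symm
    _ = 0 := by simp [hLcol]
  have hLtG : Lᵀ * G = Lᵀ := by
    calc Lᵀ * G = Lᵀ * Gᵀ := by rw [hGsym]
    _ = (G * L)ᵀ := (Matrix.transpose_mul G L).symm
    _ = Lᵀ := by rw [hGL]
  intro i j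
  -- the column x := fun m => (1 - G) m j is W-harmonic
  set x : Fin n → ℝ := fun m => (1 : Matrix (Fin n) (Fin n) ℝ) m j - G m j with hx
  have hfix : ∀ jj, x jj = ∑ i, W i jj * x i := by
    intro jj
    have h0 : ∑ m, L m jj * G m j = ∑ m, L m jj * (1 : Matrix (Fin n) (Fin n) ℝ) m j := by
      have e1 : (Lᵀ * G) jj j = (Lᵀ * (1 : Matrix (Fin n) (Fin n) ℝ)) jj j := by
        rw [hLtG, Matrix.mul_one]
      rw [Matrix.mul_apply, Matrix.mul_apply] at e1
      calc ∑ m, L m jj * G m j = ∑ m, Lᵀ jj m * G m j := by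
            refine Finset.sum_congr rfl fun m _ => by rw [Matrix.transpose_apply]
      _ = ∑ m, Lᵀ jj m * (1 : Matrix (Fin n) (Fin n) ℝ) m j := e1
      _ = ∑ m, L m jj * (1 : Matrix (Fin n) (Fin n) ℝ) m j := by
            refine Finset.sum_congr rfl fun m _ => by rw [Matrix.transpose_apply]
    have h2 : ∑ m, L m jj * x m = 0 := by
      calc ∑ m, L m jj * x m
          = ∑ m, L m jj * (1 : Matrix (Fin n) (Fin n) ℝ) m j - ∑ m, L m jj * G m j := by
            rw [← Finset.sum_sub_distrib]
            exact Finset.sum_congr rfl fun m _ => by rw [hx]; ring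
      _ = 0 := by rw [h0, sub_self]
    have h3 : ∑ m, L m jj * x m = x jj - ∑ m, W m jj * x m := by
      calc ∑ m, L m jj * x m
          = ∑ m, ((1 : Matrix (Fin n) (Fin n) ℝ) m jj * x m - W m jj * x m) := by
            refine Finset.sum_congr rfl fun m _ => by
              rw [hL]
              show ((1 : Matrix (Fin n) (Fin n) ℝ) m jj - W m jj) * x m = _
              ring
      _ = ∑ m, (1 : Matrix (Fin n) (Fin n) ℝ) m jj * x m - ∑ m, W m jj * x m := Finset.sum_sub_distrib _ _
      _ = x jj - ∑ m, W m jj * x m := by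
            congr 1
            simp [Matrix.one_apply]
    rw [h3] at h2
    linarith
  have hconst := fixed_const hn W hWnn hWcol hirr x hfix
  have hcolsum : ∑ m, x m = 1 := by
    calc ∑ m, x m = ∑ m, (1 : Matrix (Fin n) (Fin n) ℝ) m j - ∑ m, G m j := by
          rw [← Finset.sum_sub_distrib]
    _ = 1 - 0 := by rw [hGcol j]; congr 1; simp [Matrix.one_apply]
    _ = 1 := by ring
  have hxval : x i = (n : ℝ)⁻¹ := by
    have hsum : ∑ m, x m = n * x i := by
      calc ∑ m, x m = ∑ _m : Fin n, x i := Finset.sum_congr rfl fun m _ => hconst m i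
      _ = n * x i := by rw [Finset.sum_const, Finset.card_univ, Fintype.card_fin, nsmul_eq_mul]
    have hn' : (n : ℝ) ≠ 0 := Nat.cast_ne_zero.2 hn.ne'
    rw [hsum] at hcolsum
    rw [inv_eq_one_div, eq_div_iff hn']
    linarith [hcolsum]
  have : G i j = (1 : Matrix (Fin n) (Fin n) ℝ) i j - x i := by rw [hx]; ring
  rw [this, hxval]

lemma sLp_eq_zero (W : Matrix (Fin n) (Fin n) ℝ) (s : Fin n → ℝ)
    (hstat : W.mulVec s = s)
    (Lp : Matrix (Fin n) (Fin n) ℝ)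
    (hLp : IsMoorePenrose (1 - W) Lp) :
    ∀ j, ∑ i, s i * Lp i j = 0 := by
  set L : Matrix (Fin n) (Fin n) ℝ := 1 - W with hL
  set P : Matrix (Fin n) (Fin n) ℝ := Lp * L with hP
  have hPsym : Pᵀ = P := hLp.2.2.2
  have hPLp : P * Lp = Lp := hLp.2.1
  have hPs : P.mulVec s = 0 := by
    rw [hP, ← Matrix.mulVec_mulVec]
    have : L.mulVec s = 0 := by
      rw [hL, Matrix.sub_mulVec, Matrix.one_mulVec, hstat, sub_self]
    rw [this, Matrix.mulVec_zero]
  have hPe : ∀ a b, P a b = P b a := by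
    intro a b
    conv_lhs => rw [← hPsym]
    exact Matrix.transpose_apply P a b
  have hsP : ∀ m, ∑ i, s i * P i m = 0 := by
    intro m
    calc ∑ i, s i * P i m = ∑ i, P m i * s i := by
          refine Finset.sum_congr rfl fun i _ => by rw [hPe i m]; ring
    _ = P.mulVec s m := rfl
    _ = 0 := by rw [hPs]; rfl
  intro j
  calc ∑ i, s i * Lp i j = ∑ i, s i * (P * Lp) i j := by rw [hPLp]
  _ = ∑ i, s i * ∑ m, P i m * Lp m j := by
        refine Finset.sum_congr rfl fun i _ => by rw [Matrix.mul_apply]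
  _ = ∑ i, ∑ m, s i * (P i m * Lp m j) := by
        refine Finset.sum_congr rfl fun i _ => Finset.mul_sum _ _ _
  _ = ∑ m, ∑ i, s i * (P i m * Lp m j) := Finset.sum_comm
  _ = ∑ m, (∑ i, s i * P i m) * Lp m j := by
        refine Finset.sum_congr rfl fun m _ => ?_
        rw [Finset.sum_mul]
        exact Finset.sum_congr rfl fun i _ => by ring
  _ = 0 := by simp [hsP]


/-- mulVec of a Finset sum of matrices. -/
lemma sum_mulVec {ι : Type*} (s : Finset ι) (f : ι → Matrix (Fin n) (Fin n) ℝ) (x : Fin n → ℝ) :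
    (∑ i ∈ s, f i).mulVec x = ∑ i ∈ s, (f i).mulVec x := by
  funext i0
  calc (∑ i ∈ s, f i).mulVec x i0 = ∑ m, (∑ i ∈ s, f i) i0 m * x m := rfl
  _ = ∑ m, (∑ i ∈ s, f i i0 m) * x m := by
        refine Finset.sum_congr rfl fun m _ => by rw [Matrix.sum_apply]
  _ = ∑ m, ∑ i ∈ s, f i i0 m * x m := by
        refine Finset.sum_congr rfl fun m _ => Finset.sum_mul _ _ _
  _ = ∑ i ∈ s, ∑ m, f i i0 m * x m := Finset.sum_comm
  _ = (∑ i ∈ s, (f i).mulVec x) i0 := by rw [Finset.sum_apply]; rfl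

end SW
set_option maxHeartbeats 1000000 in
/-- For a strongly connected random walk matrix `W` with stationary `s`, and a convex
combination `M = Σ_{i=0}^{k} α_i W^i` of walks of length at most `k`: if
`k < ‖L†‖₁/(2√n)` where `L = I - W`, then `‖M - s 1ᵀ‖₁ > 1/(2√n)` (operator `ℓ₁` norms
are the maximum column `ℓ₁` norms). -/
theorem short_walks_do_not_mix {n : ℕ} (hn : 0 < n)
    (W : Matrix (Fin n) (Fin n) ℝ)
    (hWnn : ∀ i j, 0 ≤ W i j) (hWcol : ∀ j, ∑ i, W i j = 1)
    (hirr : ∀ i j : Fin n, ∃ k : ℕ, 0 < (W ^ k) i j)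
    (s : Fin n → ℝ) (hs : ∀ i, 0 ≤ s i) (hs1 : ∑ i, s i = 1)
    (hstat : W.mulVec s = s)
    (k : ℕ) (α : ℕ → ℝ) (hα : ∀ i, 0 ≤ α i)
    (hα1 : ∑ i ∈ Finset.range (k + 1), α i = 1)
    (M : Matrix (Fin n) (Fin n) ℝ)
    (hM : M = ∑ i ∈ Finset.range (k + 1), α i • W ^ i)
    (Lp : Matrix (Fin n) (Fin n) ℝ)
    (hLp : IsMoorePenrose ((1 : Matrix (Fin n) (Fin n) ℝ) - W) Lp)
    (hk : (k : ℝ) < (⨆ j : Fin n, ∑ i, |Lp i j|) / (2 * Real.sqrt n)) :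
    1 / (2 * Real.sqrt n) < ⨆ j : Fin n, ∑ i, |M i j - s i| := by
  classical
  have hne : Nonempty (Fin n) := ⟨⟨0, hn⟩⟩
  by_contra hcon
  push_neg at hcon
  -- basic scalars
  set r : ℝ := Real.sqrt n with hr_def
  have hr1 : 1 ≤ r := by
    rw [hr_def, show (1:ℝ) = Real.sqrt 1 from Real.sqrt_one.symm]
    exact Real.sqrt_le_sqrt (by exact_mod_cast hn)
  have hr0 : (0:ℝ) < r := lt_of_lt_of_le one_pos hr1
  have hrsq : r ^ 2 = (n:ℝ) := Real.sq_sqrt (Nat.cast_nonneg n)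
  have hn0 : (0:ℝ) < (n:ℝ) := by exact_mod_cast hn
  set q : ℝ := 1 / (2 * r) with hq_def
  have hq0 : (0:ℝ) < q := by rw [hq_def]; positivity
  have hq1 : q < 1 := by
    rw [hq_def, div_lt_one (by positivity)]; linarith
  set γ : ℝ := (n:ℝ)⁻¹ with hγ_def
  have hγ0 : 0 ≤ γ := by rw [hγ_def]; positivity
  have hγn : (n:ℝ) * γ = 1 := by rw [hγ_def]; field_simp
  have hγ1 : γ ≤ 1 := by
    have : (1:ℝ) ≤ (n:ℝ) := by exact_mod_cast hn
    rw [hγ_def]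
    exact inv_le_one_of_one_le₀ this
  -- column bound on A = M - s1ᵀ
  have hAcol : ∀ jj, ∑ i, |M i jj - s i| ≤ q := fun jj =>
    le_trans (le_ciSup (f := fun (j : Fin n) => ∑ i, |M i j - s i|)
      (Set.Finite.bddAbove (Set.finite_range _)) jj) hcon
  -- matrices
  set J : Matrix (Fin n) (Fin n) ℝ := Matrix.of (fun i _ => s i) with hJ_def
  set A : Matrix (Fin n) (Fin n) ℝ := M - J with hA_def
  set Sm : ℕ → Matrix (Fin n) (Fin n) ℝ := fun i => ∑ l ∈ Finset.range i, W ^ l with hSm_def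
  set T : Matrix (Fin n) (Fin n) ℝ := ∑ i ∈ Finset.range (k+1), α i • Sm i with hT_def
  set Vp : Matrix (Fin n) (Fin n) ℝ := (1 - W) * Lp with hVp_def
  set t : ℝ := ∑ i ∈ Finset.range (k+1), α i * (i:ℝ) with ht_def
  have ht0 : 0 ≤ t := Finset.sum_nonneg fun i _ => mul_nonneg (hα i) (Nat.cast_nonneg i)
  have htk : t ≤ (k:ℝ) := by
    rw [ht_def]
    calc ∑ i ∈ Finset.range (k+1), α i * (i:ℝ)
        ≤ ∑ i ∈ Finset.range (k+1), α i * (k:ℝ) := by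
          refine Finset.sum_le_sum fun i hi => ?_
          refine mul_le_mul_of_nonneg_left ?_ (hα i)
          exact_mod_cast Nat.lt_succ_iff.1 (Finset.mem_range.1 hi)
    _ = (∑ i ∈ Finset.range (k+1), α i) * (k:ℝ) := (Finset.sum_mul _ _ _).symm
    _ = (k:ℝ) := by rw [hα1, one_mul]
  -- structural identities
  have hWJ : W * J = J := by
    ext i jj
    rw [Matrix.mul_apply]
    show ∑ m, W i m * s m = s i
    exact congrFun hstat i
  have hJW : J * W = J := by
    ext i jj
    rw [Matrix.mul_apply]
    show ∑ m, s i * W m jj = s i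
    rw [← Finset.mul_sum, hWcol, mul_one]
  have hJJ : J * J = J := by
    ext i jj
    rw [Matrix.mul_apply]
    show ∑ m, s i * s m = s i
    rw [← Finset.mul_sum, hs1, mul_one]
  have hWlJ : ∀ l : ℕ, W ^ l * J = J := by
    intro l
    induction l with
    | zero => rw [pow_zero, one_mul]
    | succ l ih => rw [pow_succ, mul_assoc, hWJ, ih]
  have hJWl : ∀ l : ℕ, J * W ^ l = J := by
    intro l
    induction l with
    | zero => rw [pow_zero, mul_one]
    | succ l ih => rw [pow_succ, ← mul_assoc, ih, hJW]
  have hMJ : M * J = J := by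
    rw [hM, Finset.sum_mul]
    calc ∑ i ∈ Finset.range (k+1), (α i • W ^ i) * J
        = ∑ i ∈ Finset.range (k+1), α i • J := by
          refine Finset.sum_congr rfl fun i _ => by rw [smul_mul_assoc, hWlJ]
    _ = (∑ i ∈ Finset.range (k+1), α i) • J := (Finset.sum_smul).symm
    _ = J := by rw [hα1, one_smul]
  have hJM : J * M = J := by
    rw [hM, Finset.mul_sum]
    calc ∑ i ∈ Finset.range (k+1), J * (α i • W ^ i)
        = ∑ i ∈ Finset.range (k+1), α i • J := by
          refine Finset.sum_congr rfl fun i _ => by rw [mul_smul_comm, hJWl]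
    _ = (∑ i ∈ Finset.range (k+1), α i) • J := (Finset.sum_smul).symm
    _ = J := by rw [hα1, one_smul]
  have hMmJ : ∀ m : ℕ, M ^ m * J = J := by
    intro m
    induction m with
    | zero => rw [pow_zero, one_mul]
    | succ m ih => rw [pow_succ, mul_assoc, hMJ, ih]
  have hApow : ∀ m : ℕ, A ^ (m+1) = M ^ (m+1) - J := by
    intro m
    induction m with
    | zero => rw [pow_one, pow_one, hA_def]
    | succ m ih =>
      rw [pow_succ, ih, hA_def, sub_mul, mul_sub, mul_sub, hMmJ, hJM, hJJ, ← pow_succ]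
      abel
  have hSL : ∀ i : ℕ, Sm i * (1 - W) = 1 - W ^ i := by
    intro i
    induction i with
    | zero => simp [hSm_def]
    | succ i ih =>
      have : Sm (i+1) = Sm i + W ^ i := by rw [hSm_def]; exact Finset.sum_range_succ _ _
      rw [this, add_mul, ih, mul_sub, mul_one, ← pow_succ]
      abel
  have hTL : T * (1 - W) = 1 - M := by
    rw [hT_def, Finset.sum_mul]
    calc ∑ i ∈ Finset.range (k+1), (α i • Sm i) * (1 - W)
        = ∑ i ∈ Finset.range (k+1), (α i • (1:Matrix (Fin n) (Fin n) ℝ) - α i • W ^ i) := by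
          refine Finset.sum_congr rfl fun i _ => by rw [smul_mul_assoc, hSL, smul_sub]
    _ = (∑ i ∈ Finset.range (k+1), α i • (1:Matrix (Fin n) (Fin n) ℝ))
        - ∑ i ∈ Finset.range (k+1), α i • W ^ i := Finset.sum_sub_distrib _ _
    _ = 1 - M := by
        rw [← Finset.sum_smul, hα1, one_smul, ← hM]
  have hbase : Lp = M * Lp + T * Vp := by
    have h1 : T * Vp = (1 - M) * Lp := by rw [hVp_def, ← mul_assoc, hTL]
    rw [h1, sub_mul, one_mul]
    abel
  have hiter : ∀ m : ℕ, Lp = M ^ m * Lp + ∑ j' ∈ Finset.range m, M ^ j' * (T * Vp) := by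
    intro m
    induction m with
    | zero => simp
    | succ m ih =>
      have h2 : M ^ m * Lp = M ^ (m+1) * Lp + M ^ m * (T * Vp) := by
        calc M ^ m * Lp = M ^ m * (M * Lp + T * Vp) := by rw [← hbase]
        _ = M ^ m * (M * Lp) + M ^ m * (T * Vp) := mul_add _ _ _
        _ = M ^ (m+1) * Lp + M ^ m * (T * Vp) := by rw [← mul_assoc, ← pow_succ]
      calc Lp = M ^ m * Lp + ∑ j' ∈ Finset.range m, M ^ j' * (T * Vp) := ih
      _ = M ^ (m+1) * Lp + (M ^ m * (T * Vp) + ∑ j' ∈ Finset.range m, M ^ j' * (T * Vp)) := by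
            rw [h2]; abel
      _ = M ^ (m+1) * Lp + ∑ j' ∈ Finset.range (m+1), M ^ j' * (T * Vp) := by
            rw [Finset.sum_range_succ]; abel
  -- entries and column sums of T
  have hSmnn : ∀ i' a b, 0 ≤ Sm i' a b := by
    intro i' a b
    rw [hSm_def]
    show 0 ≤ (∑ l ∈ Finset.range i', W ^ l) a b
    rw [Matrix.sum_apply]
    exact Finset.sum_nonneg fun l _ => SW.pow_nonneg W hWnn l a b
  have hSmcol : ∀ i' jj, ∑ i, Sm i' i jj = (i' : ℝ) := by
    intro i' jj
    rw [hSm_def]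
    show ∑ i, (∑ l ∈ Finset.range i', W ^ l) i jj = (i' : ℝ)
    calc ∑ i, (∑ l ∈ Finset.range i', W ^ l) i jj
        = ∑ i, ∑ l ∈ Finset.range i', (W ^ l) i jj := by
          refine Finset.sum_congr rfl fun i _ => by rw [Matrix.sum_apply]
    _ = ∑ l ∈ Finset.range i', ∑ i, (W ^ l) i jj := Finset.sum_comm
    _ = ∑ l ∈ Finset.range i', (1:ℝ) := by
          refine Finset.sum_congr rfl fun l _ => SW.pow_colsum W hWcol l jj
    _ = (i' : ℝ) := by rw [Finset.sum_const, Finset.card_range, nsmul_eq_mul, mul_one]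
  have hTapp : ∀ a b, T a b = ∑ i ∈ Finset.range (k+1), α i * Sm i a b := by
    intro a b
    rw [hT_def]
    show (∑ i ∈ Finset.range (k+1), α i • Sm i) a b = _
    rw [Matrix.sum_apply]
    exact Finset.sum_congr rfl fun i _ => rfl
  have hTnn : ∀ a b, 0 ≤ T a b := by
    intro a b
    rw [hTapp]
    exact Finset.sum_nonneg fun i _ => mul_nonneg (hα i) (hSmnn i a b)
  have hTcol : ∀ jj, ∑ i, T i jj = t := by
    intro jj
    calc ∑ i, T i jj = ∑ i, ∑ i' ∈ Finset.range (k+1), α i' * Sm i' i jj := by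
          refine Finset.sum_congr rfl fun i _ => hTapp i jj
    _ = ∑ i' ∈ Finset.range (k+1), ∑ i, α i' * Sm i' i jj := Finset.sum_comm
    _ = ∑ i' ∈ Finset.range (k+1), α i' * (i' : ℝ) := by
          refine Finset.sum_congr rfl fun i' _ => by rw [← Finset.mul_sum, hSmcol]
    _ = t := ht_def.symm
  have hTabs : ∀ jj, ∑ i, |T i jj| ≤ t := by
    intro jj
    calc ∑ i, |T i jj| = ∑ i, T i jj := by
          refine Finset.sum_congr rfl fun i _ => abs_of_nonneg (hTnn i jj)
    _ ≤ t := le_of_eq (hTcol jj)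
  -- ℓ¹ operator bounds
  have hAabs : ∀ jj, ∑ i, |A i jj| ≤ q := by
    intro jj
    have : ∀ i, A i jj = M i jj - s i := fun i => rfl
    calc ∑ i, |A i jj| = ∑ i, |M i jj - s i| := by
          refine Finset.sum_congr rfl fun i _ => by rw [this i]
    _ ≤ q := hAcol jj
  have hA1 : ∀ x : Fin n → ℝ, ∑ i, |A.mulVec x i| ≤ q * ∑ i, |x i| :=
    SW.mulVec_l1_le A q hAabs
  have hApow1 : ∀ (m : ℕ) (x : Fin n → ℝ), ∑ i, |(A ^ m).mulVec x i| ≤ q ^ m * ∑ i, |x i| := by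
    intro m
    induction m with
    | zero => intro x; rw [pow_zero, pow_zero, Matrix.one_mulVec, one_mul]
    | succ m ih =>
      intro x
      rw [pow_succ']
      rw [← Matrix.mulVec_mulVec]
      calc ∑ i, |A.mulVec ((A ^ m).mulVec x) i| ≤ q * ∑ i, |(A ^ m).mulVec x i| := hA1 _
      _ ≤ q * (q ^ m * ∑ i, |x i|) := by
            exact mul_le_mul_of_nonneg_left (ih x) hq0.le
      _ = q ^ (m+1) * ∑ i, |x i| := by ring
  -- the column of Vp
  have hVpentry : ∀ i jj, Vp i jj = (1 : Matrix (Fin n) (Fin n) ℝ) i jj - γ := by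
    rw [hVp_def, hγ_def]
    exact SW.LLp_eq hn W hWnn hWcol hirr Lp hLp
  have hsLp : ∀ jj, ∑ i, s i * Lp i jj = 0 := SW.sLp_eq_zero W s hstat Lp hLp
  -- now bound each column of Lp
  have hcolbound : ∀ jj : Fin n, ∑ i, |Lp i jj| ≤ 2 * r * (k:ℝ) := by
    intro j
    set z : Fin n → ℝ := fun i => Lp i j with hz_def
    set v : Fin n → ℝ := fun i => Vp i j with hv_def
    set tv : Fin n → ℝ := fun i => (T * Vp) i j with htv_def
    have colmul : ∀ (X Y : Matrix (Fin n) (Fin n) ℝ),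
        (fun i => (X * Y) i j) = X.mulVec (fun m => Y m j) := by
      intro X Y; funext i; rw [Matrix.mul_apply]; rfl
    have htvVec : tv = T.mulVec v := by rw [htv_def, hv_def]; exact colmul T Vp
    have hvform : ∀ i, v i = (1 : Matrix (Fin n) (Fin n) ℝ) i j - γ := fun i => hVpentry i j
    have hvsum : ∑ i, v i = 0 := by
      calc ∑ i, v i = ∑ i, ((1 : Matrix (Fin n) (Fin n) ℝ) i j - γ) :=
            Finset.sum_congr rfl fun i _ => hvform i
      _ = (∑ i, (1 : Matrix (Fin n) (Fin n) ℝ) i j) - (n:ℝ) * γ := by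
            rw [Finset.sum_sub_distrib, Finset.sum_const, Finset.card_univ, Fintype.card_fin,
              nsmul_eq_mul]
      _ = 1 - 1 := by rw [hγn]; congr 1; simp [Matrix.one_apply]
      _ = 0 := by ring
    have hv_l1 : ∑ i, |v i| = 2 * (1 - γ) := by
      have habs : ∀ i, |v i| = γ + (if i = j then 1 - 2*γ else 0) := by
        intro i
        rw [hvform i, Matrix.one_apply]
        by_cases h : i = j
        · simp only [h, if_true]
          rw [abs_of_nonneg (by linarith)]
          ring
        · simp only [h, if_false]
          rw [abs_of_nonpos (by linarith)]
          ring
      calc ∑ i, |v i| = ∑ i, (γ + (if i = j then 1 - 2*γ else 0)) :=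
            Finset.sum_congr rfl fun i _ => habs i
      _ = (n:ℝ) * γ + (1 - 2*γ) := by
            rw [Finset.sum_add_distrib, Finset.sum_const, Finset.card_univ, Fintype.card_fin,
              nsmul_eq_mul, Finset.sum_ite_eq' Finset.univ j (fun _ => 1 - 2*γ)]
            simp
      _ = 2 * (1 - γ) := by rw [hγn]; ring
    have htvsum : ∑ i, tv i = 0 := by
      calc ∑ i, tv i = ∑ i, ∑ m, T i m * v m := by
            refine Finset.sum_congr rfl fun i _ => by
              rw [htvVec]
              rfl
      _ = ∑ m, (∑ i, T i m) * v m := by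
            rw [Finset.sum_comm]
            exact Finset.sum_congr rfl fun m _ => (Finset.sum_mul _ _ _).symm
      _ = ∑ m, t * v m := by
            refine Finset.sum_congr rfl fun m _ => by rw [hTcol]
      _ = t * ∑ m, v m := (Finset.mul_sum _ _ _).symm
      _ = 0 := by rw [hvsum, mul_zero]
    have hzs : ∑ i, z i * s i = 0 := by
      calc ∑ i, z i * s i = ∑ i, s i * Lp i j :=
            Finset.sum_congr rfl fun i _ => by rw [hz_def]; ring
      _ = 0 := hsLp j
    have hJmul : ∀ x : Fin n → ℝ, J.mulVec x = (∑ m', x m') • s := by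
      intro x
      funext i
      show ∑ m, J i m * x m = (∑ m', x m') * s i
      calc ∑ m, J i m * x m = ∑ m, s i * x m := rfl
      _ = s i * ∑ m, x m := (Finset.mul_sum _ _ _).symm
      _ = (∑ m', x m') * s i := mul_comm _ _
    -- ℓ² bound for W^l applied to v
    have hWl_l2 : ∀ l : ℕ, SW.l2 ((W ^ l).mulVec v) ≤ Real.sqrt 2 * (1 - γ) := by
      intro l
      set a : Fin n → ℝ := fun i => (W ^ l) i j with ha_def
      set cv : Fin n → ℝ := fun i => (∑ m, (W ^ l) i m) - (W ^ l) i j with hcv_def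
      have hform : ∀ i, (W ^ l).mulVec v i = (1-γ) * a i - γ * cv i := by
        intro i
        show ∑ m, (W ^ l) i m * v m = _
        calc ∑ m, (W ^ l) i m * v m
            = ∑ m, ((W ^ l) i m * (1 : Matrix (Fin n) (Fin n) ℝ) m j - γ * (W ^ l) i m) := by
              refine Finset.sum_congr rfl fun m _ => by rw [hvform m]; ring
        _ = (∑ m, (W ^ l) i m * (1 : Matrix (Fin n) (Fin n) ℝ) m j) - γ * ∑ m, (W ^ l) i m := by
              rw [Finset.sum_sub_distrib, ← Finset.mul_sum]
        _ = (W ^ l) i j - γ * ∑ m, (W ^ l) i m := by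
              congr 1
              simp [Matrix.one_apply]
        _ = (1-γ) * a i - γ * cv i := by rw [ha_def, hcv_def]; ring
      have ha_nn : ∀ i, 0 ≤ a i := fun i => SW.pow_nonneg W hWnn l i j
      have ha_sum : ∑ i, a i = 1 := SW.pow_colsum W hWcol l j
      have ha_sq : ∑ i, a i ^ 2 ≤ 1 := by
        have := Finset.sum_sq_le_sq_sum_of_nonneg (s := Finset.univ) (f := a)
          (fun i _ => ha_nn i)
        rw [ha_sum] at this
        simpa using this
      have hcv_nn : ∀ i, 0 ≤ cv i := by
        intro i
        rw [hcv_def]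
        have : (W ^ l) i j ≤ ∑ m, (W ^ l) i m :=
          Finset.single_le_sum (fun m _ => SW.pow_nonneg W hWnn l i m) (Finset.mem_univ j)
        simpa using this
      have hcv_sum : ∑ i, cv i = (n:ℝ) - 1 := by
        calc ∑ i, cv i = (∑ i, ∑ m, (W ^ l) i m) - ∑ i, (W ^ l) i j := by
              rw [hcv_def, Finset.sum_sub_distrib]
        _ = (∑ m, ∑ i, (W ^ l) i m) - 1 := by rw [Finset.sum_comm, ha_sum]
        _ = (∑ m : Fin n, (1:ℝ)) - 1 := by
              congr 1
              exact Finset.sum_congr rfl fun m _ => SW.pow_colsum W hWcol l m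
        _ = (n:ℝ) - 1 := by rw [Finset.sum_const, Finset.card_univ, Fintype.card_fin, nsmul_eq_mul, mul_one]
      have hcv_sq : ∑ i, cv i ^ 2 ≤ ((n:ℝ) - 1)^2 := by
        have := Finset.sum_sq_le_sq_sum_of_nonneg (s := Finset.univ) (f := cv)
          (fun i _ => hcv_nn i)
        rw [hcv_sum] at this
        exact this
      have hac : 0 ≤ ∑ i, a i * cv i :=
        Finset.sum_nonneg fun i _ => mul_nonneg (ha_nn i) (hcv_nn i)
      have hγn1 : γ * ((n:ℝ) - 1) = 1 - γ := by
        have e : γ * ((n:ℝ) - 1) = (n:ℝ) * γ - γ := by ring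
        rw [e, hγn]
      have hsq : SW.l2 ((W ^ l).mulVec v) ^ 2 ≤ 2 * (1-γ)^2 := by
        rw [SW.sq_l2]
        calc ∑ i, ((W ^ l).mulVec v i) ^ 2
            = ∑ i, ((1-γ)^2 * a i ^ 2 + γ^2 * cv i ^ 2 - 2*((1-γ)*γ) * (a i * cv i)) := by
              refine Finset.sum_congr rfl fun i _ => by rw [hform i]; ring
        _ = (1-γ)^2 * (∑ i, a i ^ 2) + γ^2 * (∑ i, cv i ^ 2)
            - 2*((1-γ)*γ) * ∑ i, a i * cv i := by
              rw [Finset.sum_sub_distrib, Finset.sum_add_distrib, ← Finset.mul_sum,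
                ← Finset.mul_sum, ← Finset.mul_sum]
        _ ≤ (1-γ)^2 * 1 + γ^2 * ((n:ℝ)-1)^2 - 0 := by
              have h1 : (1-γ)^2 * (∑ i, a i ^ 2) ≤ (1-γ)^2 * 1 :=
                mul_le_mul_of_nonneg_left ha_sq (sq_nonneg _)
              have h2 : γ^2 * (∑ i, cv i ^ 2) ≤ γ^2 * ((n:ℝ)-1)^2 :=
                mul_le_mul_of_nonneg_left hcv_sq (sq_nonneg _)
              have h3 : 0 ≤ 2*((1-γ)*γ) * ∑ i, a i * cv i := by
                refine mul_nonneg (mul_nonneg (by norm_num) (mul_nonneg (by linarith) hγ0)) hac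
              linarith
        _ = (1-γ)^2 + (γ * ((n:ℝ)-1))^2 := by ring
        _ = 2 * (1-γ)^2 := by rw [hγn1]; ring
      have hl2nn := SW.l2_nonneg ((W ^ l).mulVec v)
      have h2 : SW.l2 ((W ^ l).mulVec v) = Real.sqrt (SW.l2 ((W ^ l).mulVec v) ^ 2) :=
        (Real.sqrt_sq hl2nn).symm
      rw [h2]
      calc Real.sqrt (SW.l2 ((W ^ l).mulVec v) ^ 2) ≤ Real.sqrt (2 * (1-γ)^2) :=
            Real.sqrt_le_sqrt hsq
      _ = Real.sqrt 2 * (1-γ) := by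
            rw [Real.sqrt_mul (by norm_num), Real.sqrt_sq (by linarith)]
    -- ℓ² bound for tv
    have htv_l2 : SW.l2 tv ≤ Real.sqrt 2 * (1 - γ) * t := by
      have hdecomp : tv = ∑ i ∈ Finset.range (k+1), α i • ((Sm i).mulVec v) := by
        rw [htvVec, hT_def, SW.sum_mulVec]
        exact Finset.sum_congr rfl fun i _ => Matrix.smul_mulVec _ _ _
      rw [hdecomp]
      calc SW.l2 (∑ i ∈ Finset.range (k+1), α i • ((Sm i).mulVec v))
          ≤ ∑ i ∈ Finset.range (k+1), SW.l2 (α i • ((Sm i).mulVec v)) :=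
            SW.l2_sum_le _ _
      _ = ∑ i ∈ Finset.range (k+1), α i * SW.l2 ((Sm i).mulVec v) := by
            refine Finset.sum_congr rfl fun i _ => by
              rw [SW.l2_smul, abs_of_nonneg (hα i)]
      _ ≤ ∑ i ∈ Finset.range (k+1), α i * ((i:ℝ) * (Real.sqrt 2 * (1 - γ))) := by
            refine Finset.sum_le_sum fun i _ => ?_
            refine mul_le_mul_of_nonneg_left ?_ (hα i)
            have hSmv : (Sm i).mulVec v = ∑ l ∈ Finset.range i, (W ^ l).mulVec v := by
              rw [hSm_def]
              exact SW.sum_mulVec _ _ _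
            rw [hSmv]
            calc SW.l2 (∑ l ∈ Finset.range i, (W ^ l).mulVec v)
                ≤ ∑ l ∈ Finset.range i, SW.l2 ((W ^ l).mulVec v) := SW.l2_sum_le _ _
            _ ≤ ∑ l ∈ Finset.range i, Real.sqrt 2 * (1 - γ) :=
                Finset.sum_le_sum fun l _ => hWl_l2 l
            _ = (i:ℝ) * (Real.sqrt 2 * (1 - γ)) := by
                rw [Finset.sum_const, Finset.card_range, nsmul_eq_mul]
      _ = (∑ i ∈ Finset.range (k+1), α i * (i:ℝ)) * (Real.sqrt 2 * (1 - γ)) := by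
            rw [Finset.sum_mul]
            exact Finset.sum_congr rfl fun i _ => by ring
      _ = Real.sqrt 2 * (1 - γ) * t := by rw [← ht_def]; ring
    -- ℓ¹ bound for tv
    have htv_l1 : ∑ i, |tv i| ≤ t * (2 * (1 - γ)) := by
      rw [htvVec]
      calc ∑ i, |T.mulVec v i| ≤ t * ∑ i, |v i| := SW.mulVec_l1_le T t hTabs v
      _ = t * (2 * (1 - γ)) := by rw [hv_l1]
    -- geometric sum bound
    have hgeo : ∀ m : ℕ, ∑ j' ∈ Finset.range m, q ^ (j'+1) ≤ q / (1 - q) := by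
      intro m
      have h1q : (0:ℝ) < 1 - q := by linarith
      have hgs : (∑ j' ∈ Finset.range m, q ^ j') * (1 - q) = 1 - q ^ m := by
        have := geom_sum_mul q m
        nlinarith [this]
      have hgs2 : ∑ j' ∈ Finset.range m, q ^ j' ≤ 1 / (1 - q) := by
        rw [le_div_iff₀ h1q, hgs]
        nlinarith [pow_nonneg hq0.le m]
      calc ∑ j' ∈ Finset.range m, q ^ (j'+1) = q * ∑ j' ∈ Finset.range m, q ^ j' := by
            rw [Finset.mul_sum]
            exact Finset.sum_congr rfl fun j' _ => by ring
      _ ≤ q * (1 / (1 - q)) := mul_le_mul_of_nonneg_left hgs2 hq0.le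
      _ = q / (1 - q) := by ring
    -- the key scalar inequality
    have hkey : Real.sqrt 2 * (1 - γ) * t + (q / (1 - q)) * (t * (2 * (1 - γ))) ≤ 2 * t := by
      have h2r : (0:ℝ) < 2 * r - 1 := by linarith
      have hs2 : Real.sqrt 2 ≤ 1.5 := by
        rw [show (1.5:ℝ) = Real.sqrt (1.5 ^ 2) from (Real.sqrt_sq (by norm_num)).symm]
        exact Real.sqrt_le_sqrt (by norm_num)
      have hs0 : (0:ℝ) ≤ Real.sqrt 2 := Real.sqrt_nonneg 2
      have hγr : γ = 1 / r ^ 2 := by rw [hγ_def, hrsq]; rw [one_div]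
      have hqq : q / (1 - q) = 1 / (2 * r - 1) := by
        have h1q : (0:ℝ) < 1 - q := by linarith
        rw [div_eq_div_iff (ne_of_gt h1q) (ne_of_gt h2r), hq_def]
        field_simp
      have key3 : (r^2 - 1) * (Real.sqrt 2 * (2*r - 1) + 2) ≤ 2 * (r^2 * (2*r - 1)) := by
        have hu : (0:ℝ) ≤ r - 1 := by linarith
        have hs' : (0:ℝ) ≤ 1.5 - Real.sqrt 2 := by linarith
        nlinarith [mul_nonneg hu hu, mul_nonneg (mul_nonneg hu hu) hu,
          mul_nonneg hs' hu, mul_nonneg hs' (mul_nonneg hu hu),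
          mul_nonneg hs' (mul_nonneg (mul_nonneg hu hu) hu)]
      have key2 : Real.sqrt 2 * (1 - γ) + (q / (1 - q)) * (2 * (1 - γ)) ≤ 2 := by
        rw [hqq, hγr]
        have hpos : (0:ℝ) < r^2 * (2*r - 1) := mul_pos (by positivity) h2r
        have heq : Real.sqrt 2 * (1 - 1/r^2) + (1/(2*r-1)) * (2 * (1 - 1/r^2))
            = ((r^2 - 1) * (Real.sqrt 2 * (2*r - 1) + 2)) / (r^2 * (2*r - 1)) := by
          have := h2r.ne'
          have hr2 : r^2 ≠ 0 := by positivity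
          rw [eq_div_iff hpos.ne']
          have e : 1/(2*r-1) * (2*r-1) = 1 := one_div_mul_cancel this
          have e2 : 1/r^2 * r^2 = 1 := one_div_mul_cancel hr2
          linear_combination (-(Real.sqrt 2)*(2*r-1) - 2*(1/(2*r-1))*(2*r-1)) * e2 + 2*(r^2-1) * e
        rw [heq, div_le_iff₀ hpos]
        linarith [key3]
      calc Real.sqrt 2 * (1 - γ) * t + (q / (1 - q)) * (t * (2 * (1 - γ)))
          = (Real.sqrt 2 * (1 - γ) + (q / (1 - q)) * (2 * (1 - γ))) * t := by ring
      _ ≤ 2 * t := by nlinarith [ht0, key2]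
    -- per-m bound : l2 z ≤ q^(m+1) * l1 z + 2 t
    have hfin : ∀ m : ℕ, SW.l2 z ≤ q ^ (m+1) * (∑ i, |z i|) + 2 * t := by
      intro m
      set wv : Fin n → ℝ := tv + ∑ j' ∈ Finset.range m, (A ^ (j'+1)).mulVec tv with hwv_def
      set c : ℝ := ∑ m', z m' with hc_def
      set rest : Fin n → ℝ := (A ^ (m+1)).mulVec z + wv with hrest_def
      have hMsplit : ∀ m' : ℕ, M ^ (m'+1) = J + A ^ (m'+1) := by
        intro m'
        rw [hApow m']
        abel
      have hJz : J.mulVec z = c • s := by rw [hJmul z, hc_def]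
      have hJtv : J.mulVec tv = 0 := by
        rw [hJmul tv, htvsum, zero_smul]
      have hMtv : ∀ m' : ℕ, (M ^ (m'+1)).mulVec tv = (A ^ (m'+1)).mulVec tv := by
        intro m'
        rw [hMsplit m', Matrix.add_mulVec, hJtv, zero_add]
      have hzid : z = c • s + rest := by
        have hcol : z = (fun i => (M ^ (m+1) * Lp) i j)
            + (fun i => (∑ j' ∈ Finset.range (m+1), M ^ j' * (T * Vp)) i j) := by
          funext i
          have h1 : Lp i j = (M ^ (m+1) * Lp + ∑ j' ∈ Finset.range (m+1), M ^ j' * (T * Vp)) i j := by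
            rw [← hiter (m+1)]
          show Lp i j = _
          rw [h1]
          rfl
        have hterm1 : (fun i => (M ^ (m+1) * Lp) i j) = c • s + (A ^ (m+1)).mulVec z := by
          rw [colmul]
          show (M ^ (m+1)).mulVec z = _
          rw [hMsplit m, Matrix.add_mulVec, hJz]
        have hterm2 : (fun i => (∑ j' ∈ Finset.range (m+1), M ^ j' * (T * Vp)) i j) = wv := by
          have e1 : (fun i => (∑ j' ∈ Finset.range (m+1), M ^ j' * (T * Vp)) i j)
              = ∑ j' ∈ Finset.range (m+1), (M ^ j').mulVec tv := by
            funext i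
            rw [Matrix.sum_apply, Finset.sum_apply]
            refine Finset.sum_congr rfl fun j' _ => ?_
            exact congrFun (colmul (M ^ j') (T * Vp)) i
          rw [e1, Finset.sum_range_succ',
            Finset.sum_congr rfl (fun j' (_ : j' ∈ Finset.range m) => hMtv j'),
            hwv_def, pow_zero, Matrix.one_mulVec]
          abel
        rw [hcol, hterm1, hterm2, hrest_def]
        abel
      have he2 : ∀ i, z i = c * s i + rest i := fun i => congrFun hzid i
      have hdot : SW.l2 z ^ 2 ≤ SW.l2 z * SW.l2 rest := by
        rw [SW.sq_l2]
        calc ∑ i, z i ^ 2 = ∑ i, z i * (c * s i + rest i) := by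
              refine Finset.sum_congr rfl fun i _ => by rw [← he2 i]; ring
        _ = c * (∑ i, z i * s i) + ∑ i, z i * rest i := by
              rw [Finset.mul_sum, ← Finset.sum_add_distrib]
              exact Finset.sum_congr rfl fun i _ => by ring
        _ = ∑ i, z i * rest i := by rw [hzs, mul_zero, zero_add]
        _ ≤ SW.l2 z * SW.l2 rest := SW.dot_le z rest
      have hlz : SW.l2 z ≤ SW.l2 rest := by
        rcases (SW.l2_nonneg z).eq_or_lt with h | h
        · rw [← h]; exact SW.l2_nonneg rest
        · rw [pow_two] at hdot
          exact le_of_mul_le_mul_left hdot h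
      have hwv_l2 : SW.l2 wv ≤ Real.sqrt 2 * (1 - γ) * t + (q / (1 - q)) * (t * (2 * (1 - γ))) := by
        rw [hwv_def]
        calc SW.l2 (tv + ∑ j' ∈ Finset.range m, (A ^ (j'+1)).mulVec tv)
            ≤ SW.l2 tv + SW.l2 (∑ j' ∈ Finset.range m, (A ^ (j'+1)).mulVec tv) :=
              SW.l2_add_le _ _
        _ ≤ SW.l2 tv + ∑ j' ∈ Finset.range m, SW.l2 ((A ^ (j'+1)).mulVec tv) := by
              have := SW.l2_sum_le (Finset.range m) (fun j' => (A ^ (j'+1)).mulVec tv)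
              linarith
        _ ≤ Real.sqrt 2 * (1 - γ) * t + ∑ j' ∈ Finset.range m, q ^ (j'+1) * (t * (2 * (1 - γ))) := by
              have hterm : ∀ j' ∈ Finset.range m,
                  SW.l2 ((A ^ (j'+1)).mulVec tv) ≤ q ^ (j'+1) * (t * (2 * (1 - γ))) := by
                intro j' _
                calc SW.l2 ((A ^ (j'+1)).mulVec tv) ≤ ∑ i, |(A ^ (j'+1)).mulVec tv i| :=
                      SW.l2_le_l1 _
                _ ≤ q ^ (j'+1) * ∑ i, |tv i| := hApow1 (j'+1) tv
                _ ≤ q ^ (j'+1) * (t * (2 * (1 - γ))) :=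
                      mul_le_mul_of_nonneg_left htv_l1 (pow_nonneg hq0.le _)
              have := Finset.sum_le_sum hterm
              linarith [htv_l2]
        _ ≤ Real.sqrt 2 * (1 - γ) * t + (q / (1 - q)) * (t * (2 * (1 - γ))) := by
              have hC : (0:ℝ) ≤ t * (2 * (1 - γ)) := by
                refine mul_nonneg ht0 (by linarith)
              have h1 : ∑ j' ∈ Finset.range m, q ^ (j'+1) * (t * (2 * (1 - γ)))
                  = (∑ j' ∈ Finset.range m, q ^ (j'+1)) * (t * (2 * (1 - γ))) :=
                (Finset.sum_mul _ _ _).symm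
              have h2 := mul_le_mul_of_nonneg_right (hgeo m) hC
              rw [h1]
              linarith
      have hrest_l2 : SW.l2 rest ≤ q ^ (m+1) * (∑ i, |z i|) + 2 * t := by
        rw [hrest_def]
        calc SW.l2 ((A ^ (m+1)).mulVec z + wv)
            ≤ SW.l2 ((A ^ (m+1)).mulVec z) + SW.l2 wv := SW.l2_add_le _ _
        _ ≤ (∑ i, |(A ^ (m+1)).mulVec z i|) + SW.l2 wv := by
              linarith [SW.l2_le_l1 ((A ^ (m+1)).mulVec z)]
        _ ≤ q ^ (m+1) * (∑ i, |z i|) + SW.l2 wv := by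
              linarith [hApow1 (m+1) z]
        _ ≤ q ^ (m+1) * (∑ i, |z i|) + 2 * t := by
              linarith [hwv_l2, hkey]
      linarith
    -- take the limit in m
    have hfin2 : ∀ m : ℕ, SW.l2 z ≤ q ^ m * (∑ i, |z i|) + 2 * t := by
      intro m
      refine le_trans (hfin m) ?_
      have h1 : q ^ (m+1) ≤ q ^ m :=
        pow_le_pow_of_le_one hq0.le hq1.le (Nat.le_succ m)
      have h2 : (0:ℝ) ≤ ∑ i, |z i| := Finset.sum_nonneg fun i _ => abs_nonneg _
      have := mul_le_mul_of_nonneg_right h1 h2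
      linarith
    have hlim : Filter.Tendsto (fun m : ℕ => q ^ m * (∑ i, |z i|) + 2 * t)
        Filter.atTop (nhds (0 * (∑ i, |z i|) + 2 * t)) :=
      (((tendsto_pow_atTop_nhds_zero_of_lt_one hq0.le hq1).mul_const _).add_const _)
    have hl2z : SW.l2 z ≤ 2 * t := by
      have := ge_of_tendsto' hlim hfin2
      linarith [this]
    calc ∑ i, |Lp i j| = ∑ i, |z i| := rfl
    _ ≤ Real.sqrt n * SW.l2 z := SW.l1_le_sqrt_l2 z
    _ = r * SW.l2 z := by rw [← hr_def]
    _ ≤ r * (2 * t) := mul_le_mul_of_nonneg_left hl2z hr0.le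
    _ ≤ 2 * r * (k:ℝ) := by nlinarith [htk, hr0, ht0]
  -- conclude
  have hsup : (⨆ jj : Fin n, ∑ i, |Lp i jj|) ≤ 2 * r * (k:ℝ) := ciSup_le hcolbound
  have hfin3 : (⨆ jj : Fin n, ∑ i, |Lp i jj|) / (2 * r) ≤ (k:ℝ) := by
    rw [div_le_iff₀ (by positivity)]
    calc (⨆ jj : Fin n, ∑ i, |Lp i jj|) ≤ 2 * r * (k:ℝ) := hsup
    _ = (k:ℝ) * (2 * r) := by ring
  linarith [hk, hfin3]
end

section
/- Let W be the random walk matrix of a strongly connected irreducible Markov chain with stationary distribution s, and for vertices u ≠ v let h^v ∈ R^n be the vector of hitting times to v (h^v_u = H_{uv}). Then H_{uv} = (1 − (1/s_v)·1_v)ᵀ (I − W)† (1_u − 1_v), where 1 is the all-ones vector, 1_u, 1_v are standard basis vectors, and † denotes Moore–Penrose pseudoinverse. -/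
/-!
Write `L = I - W`. Off `v` the hitting-time equations say `(hᵀ L)_w = 1`, and
`hᵀ L s = hᵀ (L s) = 0` then forces `(hᵀ L)_v = 1 - 1 / s_v`, so `hᵀ L = 1 - s_v⁻¹ 1_v`.
On the other side, `L L†` is the orthogonal projection onto the range of `L`, the orthogonal
complement of the left kernel of `L`; by the maximum principle that kernel consists of the
constant vectors, so `L L†` fixes `1_u - 1_v`. Hence
`H_{uv} = hᵀ (1_u - 1_v) = hᵀ L L† (1_u - 1_v)`.
-/

open Matrix Finset

variable {ι : Type*} [Fintype ι] [DecidableEq ι]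

lemma IsMoorePenrose.mul_mulVec_eq_self_s18 {A B : Matrix ι ι ℝ} (hAB : IsMoorePenrose A B)
    {x : ι → ℝ} (hx : ∀ y, y ᵥ* A = 0 → y ⬝ᵥ x = 0) : (A * B) *ᵥ x = x := by
  set y := x - (A * B) *ᵥ x
  have hyA : y ᵥ* A = 0 := by
    rw [sub_vecMul, ← vecMul_transpose, hAB.2.2.1, vecMul_vecMul, hAB.1, sub_self]
  have hyy : y ⬝ᵥ y = 0 := by
    rw [dotProduct_sub, hx y hyA, ← mulVec_mulVec, dotProduct_mulVec, hyA, zero_dotProduct,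
      sub_zero]
  exact (sub_eq_zero.1 (dotProduct_self_eq_zero.1 hyy)).symm

namespace Matrix

lemma apply_eq_of_vecMul_apply_eq_of_forall_le {M : Matrix ι ι ℝ}
    (hM : M ∈ colStochastic ℝ ι) {x : ι → ℝ} {i : ι} (hmax : ∀ z, x z ≤ x i)
    (hx : (x ᵥ* M) i = x i) {j : ι} (hj : 0 < M j i) : x j = x i := by
  have hsum : ∑ z, M z i * (x i - x z) = 0 := by
    simp only [mul_sub, sum_sub_distrib, ← sum_mul, sum_col_of_mem_colStochastic hM, one_mul]
    rw [← hx]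
    simp [vecMul, dotProduct, mul_comm]
  have hterm := (sum_eq_zero_iff_of_nonneg fun z _ =>
    mul_nonneg (nonneg_of_mem_colStochastic hM) (sub_nonneg.2 (hmax z))).1 hsum j (mem_univ j)
  linarith [(mul_eq_zero.1 hterm).resolve_left hj.ne']

/-- Maximum principle. -/
lemma apply_eq_of_vecMul_eq_self {W : Matrix ι ι ℝ} (hW : W ∈ colStochastic ℝ ι)
    (hirr : ∀ i j, ∃ k : ℕ, 0 < (W ^ k) i j) {x : ι → ℝ} (hx : x ᵥ* W = x) (a b : ι) :
    x a = x b := by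
  have hxk (k : ℕ) : x ᵥ* W ^ k = x := by
    induction k with
    | zero => simp
    | succ k ih => rw [pow_succ, ← vecMul_vecMul, ih, hx]
  obtain ⟨i, -, hi⟩ := exists_max_image univ x ⟨a, mem_univ a⟩
  have hconst (j : ι) : x j = x i := by
    obtain ⟨k, hk⟩ := hirr j i
    exact apply_eq_of_vecMul_apply_eq_of_forall_le (pow_mem hW k) (fun z => hi z (mem_univ z))
      (congrFun (hxk k) i) hk
  rw [hconst a, hconst b]

lemma pos_of_mulVec_eq_self {W : Matrix ι ι ℝ} (hWnn : ∀ i j, 0 ≤ W i j)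
    (hirr : ∀ i j, ∃ k : ℕ, 0 < (W ^ k) i j) {s : ι → ℝ} (hs : ∀ i, 0 ≤ s i)
    (hstat : W *ᵥ s = s) {j : ι} (hj : 0 < s j) (v : ι) : 0 < s v := by
  have hsk (k : ℕ) : W ^ k *ᵥ s = s := by
    induction k with
    | zero => simp
    | succ k ih => rw [pow_succ', ← mulVec_mulVec, ih, hstat]
  obtain ⟨k, hk⟩ := hirr v j
  calc 0 < (W ^ k) v j * s j := mul_pos hk hj
    _ ≤ ∑ z, (W ^ k) v z * s z :=
      single_le_sum (fun z _ => mul_nonneg (pow_apply_nonneg hWnn k v z) (hs z)) (mem_univ j)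
    _ = s v := congrFun (hsk k) v

lemma vecMul_one_sub_apply (h : ι → ℝ) (W : Matrix ι ι ℝ) (w : ι) :
    (h ᵥ* (1 - W)) w = h w - ∑ z, W z w * h z := by
  rw [vecMul_sub, vecMul_one, Pi.sub_apply]
  simp [vecMul, dotProduct, mul_comm]

end Matrix

lemma eq_one_sub_inv_smul_single_of_dotProduct_eq_zero {g s : ι → ℝ} {v : ι}
    (hg : ∀ w, w ≠ v → g w = 1) (hs1 : ∑ i, s i = 1) (hsv : s v ≠ 0) (hgs : g ⬝ᵥ s = 0) :
    g = 1 - (s v)⁻¹ • Pi.single v 1 := by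
  have hg' : g = 1 + (g v - 1) • Pi.single v 1 := by
    funext w
    by_cases hw : w = v
    · subst hw; simp
    · simp [hg w hw, hw]
  rw [hg', add_dotProduct, smul_dotProduct, one_dotProduct, single_dotProduct, hs1,
    smul_eq_mul, one_mul] at hgs
  have hgv : g v - 1 = -(s v)⁻¹ := by field_simp; linarith
  rw [hg', hgv, neg_smul, sub_eq_add_neg]

theorem hitting_time_formula_general {n : ℕ} (W : Matrix (Fin n) (Fin n) ℝ)
    (hWnn : ∀ i j, 0 ≤ W i j) (hWcol : ∀ j, ∑ i, W i j = 1)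
    (hirr : ∀ i j : Fin n, ∃ k : ℕ, 0 < (W ^ k) i j)
    (s : Fin n → ℝ) (hs : ∀ i, 0 ≤ s i) (hs1 : ∑ i, s i = 1)
    (hstat : W.mulVec s = s)
    (u v : Fin n)
    (h : Fin n → ℝ) (hhv : h v = 0)
    (hrec : ∀ w : Fin n, w ≠ v → h w = 1 + ∑ z, W z w * h z)
    (Lp : Matrix (Fin n) (Fin n) ℝ)
    (hLp : IsMoorePenrose ((1 : Matrix (Fin n) (Fin n) ℝ) - W) Lp) :
    h u = ((1 : Fin n → ℝ) - (s v)⁻¹ • (Pi.single v 1 : Fin n → ℝ)) ⬝ᵥ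
        Lp.mulVec ((Pi.single u 1 : Fin n → ℝ) - Pi.single v 1) := by
  set e : Fin n → ℝ := Pi.single u 1 - Pi.single v 1
  have hW : W ∈ colStochastic ℝ (Fin n) := mem_colStochastic_iff_sum.2 ⟨hWnn, hWcol⟩
  obtain ⟨j, -, hj⟩ := exists_lt_of_sum_lt (s := univ) (f := 0) (g := s) (by simp [hs1])
  have hsv : 0 < s v := pos_of_mulVec_eq_self hWnn hirr hs hstat hj v
  have hproj : ((1 - W) * Lp) *ᵥ e = e := hLp.mul_mulVec_eq_self_s18 fun y hy => by
    have hyW : y ᵥ* W = y := by rwa [vecMul_sub, vecMul_one, sub_eq_zero, eq_comm] at hy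
    simp [e, dotProduct_sub, apply_eq_of_vecMul_eq_self hW hirr hyW u v]
  have hgrad : h ᵥ* (1 - W) = 1 - (s v)⁻¹ • Pi.single v 1 := by
    refine eq_one_sub_inv_smul_single_of_dotProduct_eq_zero (fun w hw => ?_) hs1 hsv.ne' ?_
    · rw [vecMul_one_sub_apply, hrec w hw, add_sub_cancel_right]
    · rw [← dotProduct_mulVec, sub_mulVec, one_mulVec, hstat, sub_self, dotProduct_zero]
  calc h u = h ⬝ᵥ e := by simp [e, dotProduct_sub, hhv]
    _ = h ⬝ᵥ ((1 - W) * Lp) *ᵥ e := by rw [hproj]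
    _ = _ := by rw [← mulVec_mulVec, dotProduct_mulVec, hgrad]

/-- Hitting time formula: for a strongly connected random walk matrix `W` with
stationary `s`, vertices `u ≠ v`, and `h` the vector of hitting times to `v`
(so `H_{uv} = h u`), one has
`H_{uv} = (1 - (1/s_v) 1_v)ᵀ (I - W)† (1_u - 1_v)`. -/
theorem hitting_time_formula {n : ℕ} (W : Matrix (Fin n) (Fin n) ℝ)
    (hWnn : ∀ i j, 0 ≤ W i j) (hWcol : ∀ j, ∑ i, W i j = 1)
    (hirr : ∀ i j : Fin n, ∃ k : ℕ, 0 < (W ^ k) i j)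
    (s : Fin n → ℝ) (hs : ∀ i, 0 ≤ s i) (hs1 : ∑ i, s i = 1)
    (hstat : W.mulVec s = s)
    (u v : Fin n) (hne : u ≠ v)
    (h : Fin n → ℝ) (hhv : h v = 0)
    (hrec : ∀ w : Fin n, w ≠ v → h w = 1 + ∑ z, W z w * h z)
    (Lp : Matrix (Fin n) (Fin n) ℝ)
    (hLp : IsMoorePenrose ((1 : Matrix (Fin n) (Fin n) ℝ) - W) Lp) :
    h u = ((1 : Fin n → ℝ) - (s v)⁻¹ • (Pi.single v 1 : Fin n → ℝ)) ⬝ᵥ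
        Lp.mulVec ((Pi.single u 1 : Fin n → ℝ) - Pi.single v 1) :=
  hitting_time_formula_general W hWnn hWcol hirr s hs hs1 hstat u v h hhv hrec Lp hLp
end
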